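/- arXiv:1406.7467 — 4 statements merged into one kernel-verified Lean document; each statement's English description precedes it below -/
import Mathlib

section
/- Fix a prime p, an integer k ≥ 1, and let Γ(k) be the subgroup of the unitary group U(p^k) generated by all scalar matrices t·I with t ∈ ℂ, |t| = 1, together with the matrices A_0,…,A_{k−1}, B_0,…,B_{k−1}. Then every element x ∈ Γ(k) can be written in the form x = t · A_0^{a(0)}·…·A_{k−1}^{a(k−1)} · B_0^{b(0)}·…·B_{k−1}^{b(k−1)} for some t ∈ ℂ with |t| = 1 and exponent functions a, b : Fin k → Fin p, and this presentation is unique: if t·∏_i A_i^{a(i)}·∏_i B_i^{b(i)} = t′·∏_i A_i^{a′(i)}·∏_i B_i^{b′(i)} with |t| = |t′| = 1 and a, b, a′, b′ : Fin k → Fin p, then t = t′, a = a′ and b = b′. -/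
open Matrix

/-- ζ = exp(2πi/p). -/
noncomputable def zetaP (p : ℕ) : ℂ := Complex.exp (2 * (Real.pi : ℂ) * Complex.I / (p : ℂ))

/-- A_i : the diagonal matrix with (A_i)_{v,v} = ζ^{v(i)}. -/
noncomputable def AmatK (p k : ℕ) (i : Fin k) :
    Matrix (Fin k → Fin p) (Fin k → Fin p) ℂ :=
  Matrix.diagonal fun v => zetaP p ^ (v i : ℕ)

/-- B_i : the permutation matrix with (B_i)_{v,w} = 1 iff w agrees with v except
w(i) = v(i) + 1 (mod p). -/
def BmatK (p k : ℕ) [NeZero p] (i : Fin k) :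
    Matrix (Fin k → Fin p) (Fin k → Fin p) ℂ :=
  Matrix.of fun v w => if w = Function.update v i (v i + 1) then 1 else 0

/-- The ordered product A_0^{a(0)} · … · A_{k-1}^{a(k-1)}. -/
noncomputable def prodA (p k : ℕ) (a : Fin k → Fin p) :
    Matrix (Fin k → Fin p) (Fin k → Fin p) ℂ :=
  ((List.finRange k).map fun i => AmatK p k i ^ (a i : ℕ)).prod

/-- The ordered product B_0^{b(0)} · … · B_{k-1}^{b(k-1)}. -/
noncomputable def prodB (p k : ℕ) [NeZero p] (b : Fin k → Fin p) :
    Matrix (Fin k → Fin p) (Fin k → Fin p) ℂ :=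
  ((List.finRange k).map fun i => BmatK p k i ^ (b i : ℕ)).prod

/-- Γ(k): the subgroup of U(p^k) generated by the unit scalar matrices together with the
matrices A_0,…,A_{k-1}, B_0,…,B_{k-1}. -/
noncomputable def GammaK (p k : ℕ) [NeZero p] :
    Subgroup (Matrix.unitaryGroup (Fin k → Fin p) ℂ) :=
  Subgroup.closure
    { x | (∃ t : ℂ, ‖t‖ = 1 ∧
            (x : Matrix (Fin k → Fin p) (Fin k → Fin p) ℂ) = t • 1) ∨
          (∃ i, (x : Matrix (Fin k → Fin p) (Fin k → Fin p) ℂ) = AmatK p k i) ∨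
          (∃ i, (x : Matrix (Fin k → Fin p) (Fin k → Fin p) ℂ) = BmatK p k i) }

/-!
Every product `t • (prodA a * prodB b)` is the monomial matrix `weylMat t a b`, whose row `v` has a
single nonzero entry `t * ζ ^ ⟨a, v⟩`, in column `v + b`. These matrices multiply like elements of
a Heisenberg group,
`weylMat t a b * weylMat t' a' b' = weylMat (t * t' * ζ ^ ⟨a', b⟩) (a + a') (b + b')`,
so those with `‖t‖ = 1` form a subgroup of the unitary group; it contains the generators of `Γ(k)`,
which gives existence. For uniqueness, row `0` of `weylMat t a b` determines `b` and `t`, and the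
entry in row `Pi.single j 1` then determines `ζ ^ a j`, hence `a j`, as `ζ` is a primitive
`p`-th root of unity.
-/

section

variable {p k : ℕ} [NeZero p]

theorem isPrimitiveRoot_zetaP : IsPrimitiveRoot (zetaP p) p :=
  Complex.isPrimitiveRoot_exp p (NeZero.ne p)

@[simp]
theorem norm_zetaP : ‖zetaP p‖ = 1 :=
  isPrimitiveRoot_zetaP.norm'_eq_one (NeZero.ne p)

theorem zetaP_pow_mod (n : ℕ) : zetaP p ^ (n % p) = zetaP p ^ n :=
  (pow_eq_pow_mod n isPrimitiveRoot_zetaP.pow_eq_one).symm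

theorem zetaP_pow_val_add (x y : Fin p) :
    zetaP p ^ ((x + y : Fin p) : ℕ) = zetaP p ^ (x : ℕ) * zetaP p ^ (y : ℕ) := by
  rw [Fin.val_add, zetaP_pow_mod, pow_add]

theorem zetaP_pow_val_one : zetaP p ^ ((1 : Fin p) : ℕ) = zetaP p := by
  rw [Fin.val_one', zetaP_pow_mod, pow_one]

theorem Fin.val_nsmul_one (x : Fin p) : (x : ℕ) • (1 : Fin p) = x := by
  open Fin.CommRing in simp

/-- The pairing `⟨a, v⟩`, not reduced mod `p`: only `ζ ^ ⟨a, v⟩` is meaningful. -/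
def natDot (a v : Fin k → Fin p) : ℕ :=
  ∑ i, (a i : ℕ) * v i

@[simp]
theorem natDot_zero_left (v : Fin k → Fin p) : natDot 0 v = 0 := by
  simp [natDot]

@[simp]
theorem natDot_zero_right (a : Fin k → Fin p) : natDot a 0 = 0 := by
  simp [natDot]

theorem zetaP_pow_natDot_add_left (a a' v : Fin k → Fin p) :
    zetaP p ^ natDot (a + a') v = zetaP p ^ natDot a v * zetaP p ^ natDot a' v := by
  simp only [natDot, ← Finset.prod_pow_eq_pow_sum, ← Finset.prod_mul_distrib, Pi.add_apply,
    pow_mul, zetaP_pow_val_add, mul_pow]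

theorem zetaP_pow_natDot_add_right (a v v' : Fin k → Fin p) :
    zetaP p ^ natDot a (v + v') = zetaP p ^ natDot a v * zetaP p ^ natDot a v' := by
  simp only [natDot, ← Finset.prod_pow_eq_pow_sum, ← Finset.prod_mul_distrib, Pi.add_apply,
    pow_mul', zetaP_pow_val_add, mul_pow]

theorem zetaP_pow_natDot_single_one_left (i : Fin k) (v : Fin k → Fin p) :
    zetaP p ^ natDot (Pi.single i 1) v = zetaP p ^ (v i : ℕ) := by
  rw [natDot, Fintype.sum_eq_single i fun j hj => by simp [Pi.single_eq_of_ne hj],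
    Pi.single_eq_same, pow_mul, zetaP_pow_val_one]

theorem zetaP_pow_natDot_single_one_right (a : Fin k → Fin p) (j : Fin k) :
    zetaP p ^ natDot a (Pi.single j 1) = zetaP p ^ (a j : ℕ) := by
  rw [natDot, Fintype.sum_eq_single j fun i hi => by simp [Pi.single_eq_of_ne hi],
    Pi.single_eq_same, pow_mul', zetaP_pow_val_one]

noncomputable def weylMat (t : ℂ) (a b : Fin k → Fin p) :
    Matrix (Fin k → Fin p) (Fin k → Fin p) ℂ :=
  of fun v w => if w = v + b then t * zetaP p ^ natDot a v else 0

omit [NeZero p] in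
theorem smul_weylMat (s t : ℂ) (a b : Fin k → Fin p) :
    s • weylMat t a b = weylMat (s * t) a b := by
  ext v w
  simp [weylMat, mul_assoc]

theorem weylMat_one : weylMat 1 (0 : Fin k → Fin p) 0 = 1 := by
  ext v w
  simp [weylMat, one_apply, eq_comm]

theorem weylMat_mul (t t' : ℂ) (a a' b b' : Fin k → Fin p) :
    weylMat t a b * weylMat t' a' b' =
      weylMat (t * t' * zetaP p ^ natDot a' b) (a + a') (b + b') := by
  ext v w
  simp only [weylMat, mul_apply, of_apply, ite_mul, zero_mul, Finset.sum_ite_eq',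
    Finset.mem_univ, if_true, ← add_assoc]
  split_ifs
  · rw [zetaP_pow_natDot_add_left, zetaP_pow_natDot_add_right]
    ring
  · rw [mul_zero]

theorem weylMat_pow_left (a : Fin k → Fin p) (n : ℕ) :
    weylMat 1 a 0 ^ n = weylMat 1 (n • a) 0 := by
  induction n with
  | zero => rw [pow_zero, zero_nsmul, weylMat_one]
  | succ n ih => simp [pow_succ, ih, weylMat_mul, succ_nsmul]

theorem weylMat_pow_right (b : Fin k → Fin p) (n : ℕ) :
    weylMat 1 0 b ^ n = weylMat 1 0 (n • b) := by
  induction n with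
  | zero => rw [pow_zero, zero_nsmul, weylMat_one]
  | succ n ih => simp [pow_succ, ih, weylMat_mul, succ_nsmul]

theorem list_prod_weylMat_left (l : List (Fin k → Fin p)) :
    (l.map fun a => weylMat 1 a 0).prod = weylMat 1 l.sum 0 := by
  induction l with
  | nil => exact weylMat_one.symm
  | cons a l ih => simp [ih, weylMat_mul]

theorem list_prod_weylMat_right (l : List (Fin k → Fin p)) :
    (l.map fun b => weylMat 1 0 b).prod = weylMat 1 0 l.sum := by
  induction l with
  | nil => exact weylMat_one.symm
  | cons b l ih => simp [ih, weylMat_mul]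

theorem AmatK_eq_weylMat (i : Fin k) : AmatK p k i = weylMat 1 (Pi.single i 1) 0 := by
  ext v w
  simp [AmatK, weylMat, diagonal_apply, zetaP_pow_natDot_single_one_left, eq_comm]

theorem BmatK_eq_weylMat (i : Fin k) : BmatK p k i = weylMat 1 0 (Pi.single i 1) := by
  have hupdate (v : Fin k → Fin p) : Function.update v i (v i + 1) = v + Pi.single i 1 := by
    ext j
    rcases eq_or_ne j i with rfl | hj
    · simp
    · simp [hj]
  ext v w
  simp [BmatK, weylMat, hupdate]

theorem prodA_eq_weylMat (a : Fin k → Fin p) : prodA p k a = weylMat 1 a 0 := by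
  have hpow (i : Fin k) : AmatK p k i ^ (a i : ℕ) = weylMat 1 (Pi.single i (a i)) 0 := by
    rw [AmatK_eq_weylMat, weylMat_pow_left, ← Pi.single_smul, Fin.val_nsmul_one]
  simpa [prodA, hpow, Function.comp_def, ← Fin.sum_univ_def, Finset.univ_sum_single] using
    list_prod_weylMat_left ((List.finRange k).map fun i => Pi.single i (a i))

theorem prodB_eq_weylMat (b : Fin k → Fin p) : prodB p k b = weylMat 1 0 b := by
  have hpow (i : Fin k) : BmatK p k i ^ (b i : ℕ) = weylMat 1 0 (Pi.single i (b i)) := by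
    rw [BmatK_eq_weylMat, weylMat_pow_right, ← Pi.single_smul, Fin.val_nsmul_one]
  simpa [prodB, hpow, Function.comp_def, ← Fin.sum_univ_def, Finset.univ_sum_single] using
    list_prod_weylMat_right ((List.finRange k).map fun i => Pi.single i (b i))

theorem smul_prodA_mul_prodB (t : ℂ) (a b : Fin k → Fin p) :
    t • (prodA p k a * prodB p k b) = weylMat t a b := by
  rw [prodA_eq_weylMat, prodB_eq_weylMat, weylMat_mul, smul_weylMat]
  simp

theorem weylMat_inj {t t' : ℂ} {a a' b b' : Fin k → Fin p} (ht : t ≠ 0) :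
    weylMat t a b = weylMat t' a' b' ↔ t = t' ∧ a = a' ∧ b = b' := by
  refine ⟨fun h => ?_, by rintro ⟨rfl, rfl, rfl⟩; rfl⟩
  have hentry (v w : Fin k → Fin p) : weylMat t a b v w = weylMat t' a' b' v w := by rw [h]
  obtain rfl : b = b' := by
    by_contra hne
    simpa [weylMat, hne, ht] using hentry 0 b
  obtain rfl : t = t' := by simpa [weylMat] using hentry 0 b
  refine ⟨rfl, funext fun j => Fin.ext ?_, rfl⟩
  have hzeta : zetaP p ^ natDot a (Pi.single j 1) = zetaP p ^ natDot a' (Pi.single j 1) := by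
    have hrow := hentry (Pi.single j 1) (Pi.single j 1 + b)
    simp only [weylMat, of_apply] at hrow
    exact mul_left_cancel₀ ht hrow
  rw [zetaP_pow_natDot_single_one_right, zetaP_pow_natDot_single_one_right] at hzeta
  exact isPrimitiveRoot_zetaP.pow_inj (a j).isLt (a' j).isLt hzeta

end

noncomputable def weylGroup (p k : ℕ) [NeZero p] : Subgroup (unitaryGroup (Fin k → Fin p) ℂ) where
  carrier := {x | ∃ (t : ℂ) (a b : Fin k → Fin p), ‖t‖ = 1 ∧ (x : Matrix _ _ ℂ) = weylMat t a b}
  one_mem' := ⟨1, 0, 0, norm_one, weylMat_one.symm⟩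
  mul_mem' := by
    rintro x y ⟨t, a, b, ht, hx⟩ ⟨t', a', b', ht', hy⟩
    refine ⟨t * t' * zetaP p ^ natDot a' b, a + a', b + b', by simp [ht, ht'], ?_⟩
    rw [Submonoid.coe_mul, hx, hy, weylMat_mul]
  inv_mem' := by
    rintro x ⟨t, a, b, ht, hx⟩
    have ht0 : t ≠ 0 := norm_ne_zero_iff.mp (ht ▸ one_ne_zero)
    have hphase : t * (t * zetaP p ^ natDot (-a) b)⁻¹ * zetaP p ^ natDot (-a) b = 1 := by
      have hz0 : zetaP p ≠ 0 := isPrimitiveRoot_zetaP.ne_zero (NeZero.ne p)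
      field_simp
    refine ⟨(t * zetaP p ^ natDot (-a) b)⁻¹, -a, -b, by simp [ht], ?_⟩
    refine left_inv_eq_right_inv (congrArg Subtype.val (inv_mul_cancel x)) ?_
    rw [hx, weylMat_mul, hphase, add_neg_cancel, add_neg_cancel, weylMat_one]

theorem GammaK_le_weylGroup {p k : ℕ} [NeZero p] : GammaK p k ≤ weylGroup p k := by
  refine Subgroup.closure_le _ |>.mpr ?_
  rintro x (⟨t, ht, hx⟩ | ⟨i, hx⟩ | ⟨i, hx⟩)
  · exact ⟨t, 0, 0, ht, by rw [hx, ← weylMat_one, smul_weylMat, mul_one]⟩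
  · exact ⟨1, Pi.single i 1, 0, norm_one, hx.trans (AmatK_eq_weylMat i)⟩
  · exact ⟨1, 0, Pi.single i 1, norm_one, hx.trans (BmatK_eq_weylMat i)⟩

theorem stmt2_general (p k : ℕ) [NeZero p] :
    (∀ x ∈ GammaK p k, ∃ (t : ℂ) (a b : Fin k → Fin p), ‖t‖ = 1 ∧
      (x : Matrix (Fin k → Fin p) (Fin k → Fin p) ℂ) = t • (prodA p k a * prodB p k b)) ∧
    (∀ (t t' : ℂ) (a a' b b' : Fin k → Fin p), ‖t‖ = 1 → ‖t'‖ = 1 →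
      t • (prodA p k a * prodB p k b) = t' • (prodA p k a' * prodB p k b') →
      t = t' ∧ a = a' ∧ b = b') := by
  refine ⟨fun x hx => ?_, fun t t' a a' b b' ht _ h => ?_⟩
  · obtain ⟨t, a, b, ht, hx⟩ := GammaK_le_weylGroup hx
    exact ⟨t, a, b, ht, by rw [hx, smul_prodA_mul_prodB]⟩
  · rw [smul_prodA_mul_prodB, smul_prodA_mul_prodB] at h
    exact (weylMat_inj (norm_ne_zero_iff.mp (ht ▸ one_ne_zero))).mp h

theorem stmt2 (p k : ℕ) (hp : p.Prime) [NeZero p] (hk : 1 ≤ k) :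
    (∀ x ∈ GammaK p k, ∃ (t : ℂ) (a b : Fin k → Fin p), ‖t‖ = 1 ∧
      (x : Matrix (Fin k → Fin p) (Fin k → Fin p) ℂ) = t • (prodA p k a * prodB p k b)) ∧
    (∀ (t t' : ℂ) (a a' b b' : Fin k → Fin p), ‖t‖ = 1 → ‖t'‖ = 1 →
      t • (prodA p k a * prodB p k b) = t' • (prodA p k a' * prodB p k b') →
      t = t' ∧ a = a' ∧ b = b') :=
  stmt2_general p k
end

section
/- Fix a prime p, an integer k ≥ 1, and an integer m with p ∤ m. Let Γ(k) be the subgroup of U(p^k) generated by all scalar matrices t·I with |t| = 1 together with A_0,…,A_{k−1}, B_0,…,B_{k−1}. Then there exists a surjective group homomorphism α : Γ(k) → Γ(k) such that α(t·I) = t^m·I for every t ∈ ℂ with |t| = 1, α(A_i) = A_i^m for every 0 ≤ i < k, and α(B_i) = B_i for every 0 ≤ i < k. -/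
/-!
Every generator of Γ(k) is a monomial unitary matrix, and on monomial matrices the entrywise
power `x ↦ x ^ m` (with `0 ^ m = 0`) is multiplicative, because each entry of a product is a
single product of entries; it also commutes with `star`, so it is a homomorphism from the group
of monomial unitaries to the unitary group. It sends `t • 1`, `A_i`, `B_i` to `t ^ m • 1`,
`A_i ^ m`, `B_i`, hence maps Γ(k) into itself, and onto it: `t = s ^ m` for some `s` on the unit
circle, `A_i = (A_i ^ j) ^ m` for `j` an inverse of `m` modulo `p` since `A_i ^ p = 1`, and `B_i`
is fixed.
-/

open Matrix

theorem Complex.exists_norm_eq_one_and_zpow_eq {t : ℂ} (ht : ‖t‖ = 1) {m : ℤ} (hm : m ≠ 0) :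
    ∃ s : ℂ, ‖s‖ = 1 ∧ s ^ m = t := by
  have : NeZero m := ⟨hm⟩
  obtain ⟨s, hs⟩ := (Circle.isQuotientCoveringMap_zpow m).surjective
    ⟨t, mem_sphere_zero_iff_norm.2 ht⟩
  exact ⟨s, Circle.norm_coe s, by simpa using congrArg ((↑) : Circle → ℂ) hs⟩

def zpowMonoidWithZeroHom (G₀ : Type*) [CommGroupWithZero G₀] {m : ℤ} (hm : m ≠ 0) :
    G₀ →*₀ G₀ where
  toFun x := x ^ m
  map_zero' := zero_zpow m hm
  map_one' := one_zpow m
  map_mul' x y := mul_zpow x y m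

theorem exists_zpow_zpow_eq_self {G : Type*} [Group G] {x : G} {p : ℕ} (hx : x ^ p = 1)
    {m : ℤ} (hm : IsCoprime (p : ℤ) m) : ∃ j : ℤ, (x ^ m) ^ j = x := by
  obtain ⟨c, j, hcj⟩ := hm
  refine ⟨j, ?_⟩
  rw [← _root_.zpow_mul, show m * j = 1 + p * (-c) by linarith, _root_.zpow_add, zpow_one,
    _root_.zpow_mul, zpow_natCast, hx, _root_.one_zpow, mul_one]

theorem Subgroup.exists_surjective_endomorphism_closure {G : Type*} [Group G] {M : Subgroup G}
    {S : Set G} (hSM : S ⊆ M) (Φ : M →* G) (hmaps : ∀ x : M, (x : G) ∈ S → Φ x ∈ closure S)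
    (hsurj : ∀ s ∈ S, ∃ x : M, (x : G) ∈ closure S ∧ Φ x = s) :
    ∃ α : closure S →* closure S, Function.Surjective α ∧
      ∀ g : closure S, (α g : G) = Φ (inclusion ((closure_le M).2 hSM) g) := by
  have hΓM : closure S ≤ M := (closure_le M).2 hSM
  have hΦ : closure S ≤ ((closure S).comap Φ).map M.subtype :=
    (closure_le _).2 fun s hs => ⟨⟨s, hSM hs⟩, hmaps _ hs, rfl⟩
  let α : closure S →* closure S := (Φ.comp (inclusion hΓM)).codRestrict (closure S) fun g => by
    obtain ⟨y, hy, hyg⟩ := hΦ g.2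
    rwa [show y = inclusion hΓM g from Subtype.ext hyg] at hy
  refine ⟨α, ?_, fun g => rfl⟩
  have hα : closure S ≤ α.range.map (closure S).subtype := by
    refine (closure_le _).2 fun s hs => ?_
    obtain ⟨x, hxS, rfl⟩ := hsurj s hs
    exact ⟨α ⟨x, hxS⟩, ⟨_, rfl⟩, rfl⟩
  intro g
  obtain ⟨y, ⟨x, rfl⟩, hyg⟩ := hα g.2
  exact ⟨x, Subtype.ext hyg⟩

namespace Matrix

section RowMonomial

variable {l m n α : Type*}

def IsRowMonomial [Zero α] (g : Matrix m n α) : Prop :=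
  ∀ i, ∃ j, ∀ j' ≠ j, g i j' = 0

theorem isRowMonomial_diagonal [DecidableEq n] [Zero α] (d : n → α) :
    IsRowMonomial (diagonal d) :=
  fun i => ⟨i, fun _ hj => diagonal_apply_ne _ hj.symm⟩

theorem mul_apply_of_forall_ne_eq_zero [Fintype m] [NonUnitalNonAssocSemiring α]
    {g : Matrix l m α} {i : l} {j : m} (hj : ∀ j' ≠ j, g i j' = 0) (h : Matrix m n α) (k : n) :
    (g * h) i k = g i j * h j k :=
  Finset.sum_eq_single j (fun j' _ hj' => by simp [hj j' hj']) (by simp)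

theorem IsRowMonomial.mul [Fintype m] [NonUnitalNonAssocSemiring α] {g : Matrix l m α}
    {h : Matrix m n α} (hg : IsRowMonomial g) (hh : IsRowMonomial h) : IsRowMonomial (g * h) := by
  intro i
  obtain ⟨j, hj⟩ := hg i
  obtain ⟨k, hk⟩ := hh j
  exact ⟨k, fun k' hk' => by rw [mul_apply_of_forall_ne_eq_zero hj, hk k' hk', mul_zero]⟩

theorem IsRowMonomial.map_mul [Fintype m] [Semiring α] {β : Type*} [Semiring β]
    {g : Matrix l m α} (hg : IsRowMonomial g) (h : Matrix m n α) (f : α →*₀ β) :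
    (g * h).map f = g.map f * h.map f := by
  ext i k
  obtain ⟨j, hj⟩ := hg i
  have hfj : ∀ j' ≠ j, g.map f i j' = 0 := fun j' hj' => by simp [hj j' hj']
  rw [map_apply, mul_apply_of_forall_ne_eq_zero hj, mul_apply_of_forall_ne_eq_zero hfj,
    _root_.map_mul]
  rfl

theorem IsRowMonomial.star_of_mem_unitaryGroup [Fintype n] [DecidableEq n] [CommRing α]
    [StarRing α] [NoZeroDivisors α] {g : Matrix n n α} (hg : IsRowMonomial g)
    (hu : g ∈ unitaryGroup n α) : IsRowMonomial (star g) := by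
  intro i
  by_cases hcol : ∃ j, g j i ≠ 0
  · obtain ⟨j, hji⟩ := hcol
    refine ⟨j, fun j' hj' => ?_⟩
    by_contra hj'i
    simp only [star_apply, star_eq_zero] at hj'i
    have hrow : ∀ i' ≠ i, g j' i' = 0 := by
      obtain ⟨i₀, hi₀⟩ := hg j'
      obtain rfl : i = i₀ := by_contra fun h => hj'i (hi₀ i h)
      exact hi₀
    have h1 : (g * star g) j' j = 0 := by rw [mem_unitaryGroup_iff.1 hu, one_apply_ne hj']
    rw [mul_apply_of_forall_ne_eq_zero hrow, star_apply] at h1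
    exact mul_ne_zero hj'i (star_ne_zero.2 hji) h1
  · push Not at hcol
    exact ⟨i, fun j _ => by rw [star_apply, hcol j, star_zero]⟩

end RowMonomial

variable {n : Type*} [DecidableEq n]

theorem coe_unitaryGroup_zpow [Fintype n] {α : Type*} [CommRing α] [StarRing α]
    (x : unitaryGroup n α) (m : ℤ) :
    ((x ^ m : unitaryGroup n α) : Matrix n n α) = (x : Matrix n n α) ^ m := by
  rw [← Unitary.val_toUnits_apply, map_zpow, coe_units_zpow, Unitary.val_toUnits_apply]

section MonomialUnitaryGroup

variable (n) [Fintype n] (α : Type*) [CommRing α] [StarRing α] [NoZeroDivisors α]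

/-- For a unitary matrix, having at most one nonzero entry in each row already makes it
monomial. -/
def monomialUnitaryGroup : Subgroup (unitaryGroup n α) where
  carrier := {g | IsRowMonomial (g : Matrix n n α)}
  one_mem' := by simpa using isRowMonomial_diagonal (1 : n → α)
  mul_mem' := IsRowMonomial.mul
  inv_mem' {g} hg := hg.star_of_mem_unitaryGroup g.2

variable {n α}

def monomialUnitaryMap (f : α →*₀ α) (hf : ∀ x, f (star x) = star (f x)) :
    monomialUnitaryGroup n α →* unitaryGroup n α where
  toFun g := ⟨(g : Matrix n n α).map f, by
    rw [mem_unitaryGroup_iff, star_eq_conjTranspose, ← conjTranspose_map _ hf, ← g.2.map_mul,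
      ← star_eq_conjTranspose, mem_unitaryGroup_iff.1 g.1.2,
      Matrix.map_one _ f.map_zero f.map_one]⟩
  map_one' := Subtype.ext (Matrix.map_one _ f.map_zero f.map_one)
  map_mul' g h := Subtype.ext (g.2.map_mul _ f)

end MonomialUnitaryGroup

section Field

variable {K : Type*} [Field K]

theorem diagonal_zpow [Fintype n] {d : n → K} (hd : ∀ i, d i ≠ 0) (m : ℤ) :
    diagonal d ^ m = diagonal fun i => d i ^ m := by
  cases m with
  | ofNat k => simp [diagonal_pow]
  | negSucc k =>
    rw [zpow_negSucc, diagonal_pow]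
    refine inv_eq_left_inv ?_
    rw [diagonal_mul_diagonal, ← diagonal_one]
    congr 1
    funext i
    rw [zpow_negSucc, Pi.pow_apply, inv_mul_cancel₀ (pow_ne_zero _ (hd i))]

theorem smul_one_map_zpow {m : ℤ} (hm : m ≠ 0) (t : K) :
    (t • 1 : Matrix n n K).map (· ^ m) = t ^ m • 1 := by
  rw [smul_one_eq_diagonal, smul_one_eq_diagonal,
    diagonal_map (f := (· ^ m)) (_root_.zero_zpow m hm)]

variable [Fintype n] [StarRing K]

noncomputable def monomialUnitaryZpow {m : ℤ} (hm : m ≠ 0) :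
    monomialUnitaryGroup n K →* unitaryGroup n K :=
  monomialUnitaryMap (zpowMonoidWithZeroHom K hm) fun x => (star_zpow₀ x m).symm

theorem coe_monomialUnitaryZpow_apply {m : ℤ} (hm : m ≠ 0) (g : monomialUnitaryGroup n K) :
    (monomialUnitaryZpow hm g : Matrix n n K) = (g : Matrix n n K).map (· ^ m) :=
  rfl

end Field

theorem smul_one_mem_unitaryGroup [Fintype n] {s : ℂ} (hs : ‖s‖ = 1) :
    s • (1 : Matrix n n ℂ) ∈ unitaryGroup n ℂ := by
  refine Unitary.smul_mem_of_mem (Unitary.mem_iff_star_mul_self.2 ?_) (one_mem _)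
  rw [Complex.star_def, Complex.conj_mul', hs]
  norm_num

end Matrix

variable {p k : ℕ}

theorem zetaP_pow_self [NeZero p] : zetaP p ^ p = 1 := by
  rw [zetaP, ← Complex.exp_nat_mul, mul_div_cancel₀ _ (Nat.cast_ne_zero.2 (NeZero.ne p)),
    Complex.exp_two_pi_mul_I]

theorem amatK_pow_self [NeZero p] (i : Fin k) : AmatK p k i ^ p = 1 := by
  rw [AmatK, diagonal_pow, ← diagonal_one]
  congr 1
  funext v
  rw [Pi.pow_apply, ← pow_mul, mul_comm, pow_mul, zetaP_pow_self, one_pow]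

theorem amatK_map_zpow {m : ℤ} (hm : m ≠ 0) (i : Fin k) :
    (AmatK p k i).map (· ^ m) = AmatK p k i ^ m := by
  rw [AmatK, diagonal_map (f := (· ^ m)) (_root_.zero_zpow m hm)]
  exact (diagonal_zpow (fun _ => pow_ne_zero _ (Complex.exp_ne_zero _)) m).symm

theorem bmatK_map [NeZero p] {f : ℂ → ℂ} (hf₀ : f 0 = 0) (hf₁ : f 1 = 1) (i : Fin k) :
    (BmatK p k i).map f = BmatK p k i := by
  ext v w
  simp only [BmatK, map_apply, of_apply]
  split_ifs <;> assumption

variable (p k) in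
def gammaKGenerators [NeZero p] : Set (unitaryGroup (Fin k → Fin p) ℂ) :=
  { x | (∃ t : ℂ, ‖t‖ = 1 ∧
            (x : Matrix (Fin k → Fin p) (Fin k → Fin p) ℂ) = t • 1) ∨
          (∃ i, (x : Matrix (Fin k → Fin p) (Fin k → Fin p) ℂ) = AmatK p k i) ∨
          (∃ i, (x : Matrix (Fin k → Fin p) (Fin k → Fin p) ℂ) = BmatK p k i) }

theorem gammaK_eq_closure [NeZero p] : GammaK p k = Subgroup.closure (gammaKGenerators p k) :=
  rfl

theorem gammaKGenerators_subset_monomialUnitaryGroup [NeZero p] :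
    gammaKGenerators p k ⊆ monomialUnitaryGroup (Fin k → Fin p) ℂ := by
  rintro x (⟨t, -, hx⟩ | ⟨i, hx⟩ | ⟨i, hx⟩) <;>
    change IsRowMonomial (x : Matrix (Fin k → Fin p) (Fin k → Fin p) ℂ) <;> rw [hx]
  · rw [smul_one_eq_diagonal]
    exact isRowMonomial_diagonal _
  · exact isRowMonomial_diagonal _
  · exact fun v => ⟨Function.update v i (v i + 1), fun w hw => if_neg hw⟩

section Generators

variable {m : ℤ} (hm : m ≠ 0) {x : monomialUnitaryGroup (Fin k → Fin p) ℂ}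

theorem coe_monomialUnitaryZpow_of_coe_eq_smul_one {t : ℂ}
    (hx : (x : Matrix (Fin k → Fin p) (Fin k → Fin p) ℂ) = t • 1) :
    (monomialUnitaryZpow hm x : Matrix (Fin k → Fin p) (Fin k → Fin p) ℂ) = t ^ m • 1 := by
  rw [coe_monomialUnitaryZpow_apply, hx, smul_one_map_zpow hm]

theorem monomialUnitaryZpow_of_coe_eq_amatK {i : Fin k}
    (hx : (x : Matrix (Fin k → Fin p) (Fin k → Fin p) ℂ) = AmatK p k i) :
    monomialUnitaryZpow hm x = (x : unitaryGroup (Fin k → Fin p) ℂ) ^ m := by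
  apply Subtype.ext
  rw [coe_monomialUnitaryZpow_apply, coe_unitaryGroup_zpow, hx, amatK_map_zpow hm]

theorem monomialUnitaryZpow_of_coe_eq_bmatK [NeZero p] {i : Fin k}
    (hx : (x : Matrix (Fin k → Fin p) (Fin k → Fin p) ℂ) = BmatK p k i) :
    monomialUnitaryZpow hm x = x := by
  apply Subtype.ext
  rw [coe_monomialUnitaryZpow_apply, hx]
  exact bmatK_map (_root_.zero_zpow m hm) (_root_.one_zpow m) i

end Generators

theorem monomialUnitaryZpow_mem_closure_gammaKGenerators [NeZero p] {m : ℤ} (hm : m ≠ 0)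
    {x : monomialUnitaryGroup (Fin k → Fin p) ℂ}
    (hx : (x : unitaryGroup (Fin k → Fin p) ℂ) ∈ gammaKGenerators p k) :
    monomialUnitaryZpow hm x ∈ Subgroup.closure (gammaKGenerators p k) := by
  have hΓ := Subgroup.subset_closure hx
  rcases hx with ⟨t, ht, hx⟩ | ⟨i, hx⟩ | ⟨i, hx⟩
  · have htm : ‖t ^ m‖ = 1 := by rw [norm_zpow, ht, _root_.one_zpow]
    exact Subgroup.subset_closure
      (Or.inl ⟨t ^ m, htm, coe_monomialUnitaryZpow_of_coe_eq_smul_one hm hx⟩)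
  · rw [monomialUnitaryZpow_of_coe_eq_amatK hm hx]
    exact zpow_mem hΓ m
  · rwa [monomialUnitaryZpow_of_coe_eq_bmatK hm hx]

theorem exists_monomialUnitaryZpow_eq_of_mem_gammaKGenerators [NeZero p] (hp : p.Prime)
    {m : ℤ} (hm : ¬ (p : ℤ) ∣ m) (hm0 : m ≠ 0)
    {x : unitaryGroup (Fin k → Fin p) ℂ} (hx : x ∈ gammaKGenerators p k) :
    ∃ y : monomialUnitaryGroup (Fin k → Fin p) ℂ,
      (y : unitaryGroup (Fin k → Fin p) ℂ) ∈ Subgroup.closure (gammaKGenerators p k) ∧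
        monomialUnitaryZpow hm0 y = x := by
  have hΓ : x ∈ Subgroup.closure (gammaKGenerators p k) := Subgroup.subset_closure hx
  have hxM := gammaKGenerators_subset_monomialUnitaryGroup hx
  rcases hx with ⟨t, ht, hx⟩ | ⟨i, hx⟩ | ⟨i, hx⟩
  · obtain ⟨s, hs, rfl⟩ := Complex.exists_norm_eq_one_and_zpow_eq ht hm0
    have hy : ⟨s • 1, smul_one_mem_unitaryGroup hs⟩ ∈ gammaKGenerators p k :=
      Or.inl ⟨s, hs, rfl⟩
    refine ⟨⟨_, gammaKGenerators_subset_monomialUnitaryGroup hy⟩,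
      Subgroup.subset_closure hy, Subtype.ext ?_⟩
    rw [coe_monomialUnitaryZpow_of_coe_eq_smul_one hm0 rfl, hx]
  · have hxp : x ^ p = 1 := by
      apply Subtype.ext
      rw [SubmonoidClass.coe_pow, hx, amatK_pow_self]
      rfl
    obtain ⟨j, hj⟩ := exists_zpow_zpow_eq_self hxp
      ((Nat.prime_iff_prime_int.mp hp).coprime_iff_not_dvd.mpr hm)
    refine ⟨⟨x, hxM⟩ ^ j, zpow_mem hΓ j, ?_⟩
    rw [map_zpow, monomialUnitaryZpow_of_coe_eq_amatK hm0 hx, hj]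
  · exact ⟨⟨x, hxM⟩, hΓ, monomialUnitaryZpow_of_coe_eq_bmatK hm0 hx⟩

theorem stmt4_general (p k : ℕ) (hp : p.Prime) [NeZero p]
    (m : ℤ) (hm : ¬ (p : ℤ) ∣ m) :
    ∃ α : GammaK p k →* GammaK p k, Function.Surjective α ∧
      (∀ (g : GammaK p k) (t : ℂ), ‖t‖ = 1 →
        ((g : Matrix.unitaryGroup (Fin k → Fin p) ℂ) :
            Matrix (Fin k → Fin p) (Fin k → Fin p) ℂ) = t • 1 →
        ((α g : Matrix.unitaryGroup (Fin k → Fin p) ℂ) :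
            Matrix (Fin k → Fin p) (Fin k → Fin p) ℂ) = t ^ m • 1) ∧
      (∀ (g : GammaK p k) (i : Fin k),
        ((g : Matrix.unitaryGroup (Fin k → Fin p) ℂ) :
            Matrix (Fin k → Fin p) (Fin k → Fin p) ℂ) = AmatK p k i →
        ((α g : Matrix.unitaryGroup (Fin k → Fin p) ℂ) :
            Matrix (Fin k → Fin p) (Fin k → Fin p) ℂ) = AmatK p k i ^ m) ∧
      (∀ (g : GammaK p k) (i : Fin k),
        ((g : Matrix.unitaryGroup (Fin k → Fin p) ℂ) :
            Matrix (Fin k → Fin p) (Fin k → Fin p) ℂ) = BmatK p k i →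
        ((α g : Matrix.unitaryGroup (Fin k → Fin p) ℂ) :
            Matrix (Fin k → Fin p) (Fin k → Fin p) ℂ) = BmatK p k i) := by
  have hm0 : m ≠ 0 := by rintro rfl; exact hm (dvd_zero _)
  obtain ⟨α, hα_surj, hα⟩ := Subgroup.exists_surjective_endomorphism_closure
    gammaKGenerators_subset_monomialUnitaryGroup (monomialUnitaryZpow hm0)
    (fun _ => monomialUnitaryZpow_mem_closure_gammaKGenerators hm0)
    (fun _ => exists_monomialUnitaryZpow_eq_of_mem_gammaKGenerators hp hm hm0)
  rw [gammaK_eq_closure]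
  refine ⟨α, hα_surj, fun g t _ hg => ?_, fun g i hg => ?_, fun g i hg => ?_⟩ <;> rw [hα g]
  · exact coe_monomialUnitaryZpow_of_coe_eq_smul_one hm0 hg
  · rw [monomialUnitaryZpow_of_coe_eq_amatK hm0 hg, coe_unitaryGroup_zpow]
    exact congrArg (· ^ m) hg
  · rw [monomialUnitaryZpow_of_coe_eq_bmatK hm0 hg]
    exact hg

/-- There is a surjective endomorphism α of Γ(k) with α(t·I) = t^m·I, α(A_i) = A_i^m and
α(B_i) = B_i, whenever p ∤ m. -/
theorem stmt4 (p k : ℕ) (hp : p.Prime) [NeZero p] (hk : 1 ≤ k)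
    (m : ℤ) (hm : ¬ (p : ℤ) ∣ m) :
    ∃ α : GammaK p k →* GammaK p k, Function.Surjective α ∧
      (∀ (g : GammaK p k) (t : ℂ), ‖t‖ = 1 →
        ((g : Matrix.unitaryGroup (Fin k → Fin p) ℂ) :
            Matrix (Fin k → Fin p) (Fin k → Fin p) ℂ) = t • 1 →
        ((α g : Matrix.unitaryGroup (Fin k → Fin p) ℂ) :
            Matrix (Fin k → Fin p) (Fin k → Fin p) ℂ) = t ^ m • 1) ∧
      (∀ (g : GammaK p k) (i : Fin k),
        ((g : Matrix.unitaryGroup (Fin k → Fin p) ℂ) :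
            Matrix (Fin k → Fin p) (Fin k → Fin p) ℂ) = AmatK p k i →
        ((α g : Matrix.unitaryGroup (Fin k → Fin p) ℂ) :
            Matrix (Fin k → Fin p) (Fin k → Fin p) ℂ) = AmatK p k i ^ m) ∧
      (∀ (g : GammaK p k) (i : Fin k),
        ((g : Matrix.unitaryGroup (Fin k → Fin p) ℂ) :
            Matrix (Fin k → Fin p) (Fin k → Fin p) ℂ) = BmatK p k i →
        ((α g : Matrix.unitaryGroup (Fin k → Fin p) ℂ) :
            Matrix (Fin k → Fin p) (Fin k → Fin p) ℂ) = BmatK p k i) :=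
  stmt4_general p k hp m hm
end

section
/- Let p be a prime and let X be a finite set with n elements. If P is a p-radical subgroup of the symmetric group Σ_X, then |P| ≥ n − |X^P|, where X^P = {x ∈ X : g·x = x for all g ∈ P} is the set of points fixed by every element of P. -/
/-!
Let `D` be the group of permutations commuting with `P` and mapping every `P`-orbit to itself.
An element of `D` fixing one point of an orbit fixes the whole orbit, so an element of prime
order `q` in `D` acts without fixed points on an orbit it moves; hence `q` divides the size of
that orbit, a power of `p`, and `D` is a `p`-group. As `D` is normalized by `N(P)`, radicality
gives `D ≤ P`. For each nontrivial orbit `O`, a nontrivial central element of the image of `P` in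
`Sym(O)`, extended by the identity, lies in `D`; so `P` contains a nontrivial element supported
on `O`. If there are `k` nontrivial orbits and `O₁` is a largest one, the elements supported on
the other orbits show that a point stabilizer of `O₁` has order at least `p ^ (k - 1)`, whence
`|P| ≥ |O₁| p ^ (k - 1) ≥ k |O₁|`, which is at least the number of moved points.
-/

open Equiv MulAction

theorem IsPGroup.mul_card_le_card_of_lt {G : Type*} [Group G] {p : ℕ} [hp : Fact p.Prime]
    {H K : Subgroup G} (hK : IsPGroup p K) [Finite K] (hHK : H < K) :
    p * Nat.card H ≤ Nat.card K := by
  obtain ⟨n, hn⟩ := IsPGroup.iff_card.mp hK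
  obtain ⟨m, hm⟩ := Subgroup.card_dvd_of_le hHK.le
  obtain ⟨j, -, rfl⟩ := (Nat.dvd_prime_pow hp.out).mp (hn ▸ Dvd.intro_left _ hm.symm)
  have hj : j ≠ 0 := by
    rintro rfl
    exact hHK.ne (Subgroup.eq_of_le_of_card_ge hHK.le (by rw [hm, pow_zero, mul_one]))
  calc p * Nat.card H ≤ p ^ j * Nat.card H :=
        Nat.mul_le_mul_right _ (Nat.le_self_pow hj p)
    _ = Nat.card K := by rw [hm, mul_comm]

theorem IsPGroup.exists_ne_one_forall_commute {G : Type*} [Group G] {p : ℕ} [Fact p.Prime]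
    {H : Subgroup G} [Finite H] (hH : IsPGroup p H) (hne : H ≠ ⊥) :
    ∃ z ∈ H, z ≠ 1 ∧ ∀ h ∈ H, Commute h z := by
  have := (Subgroup.nontrivial_iff_ne_bot H).mpr hne
  have := hH.center_nontrivial
  obtain ⟨⟨⟨z, hzH⟩, hz⟩, hz1⟩ := exists_ne (1 : Subgroup.center H)
  refine ⟨z, hzH, fun h => hz1 (by ext; simp [h]), fun h hh => ?_⟩
  exact congrArg Subtype.val (Subgroup.mem_center_iff.mp hz ⟨h, hh⟩)

namespace Equiv.Perm

variable {α : Type*} {p : α → Prop} [DecidablePred p]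

theorem commute_ofSubtype {g : Perm α} (hg : ∀ x, p (g x) ↔ p x) {z : Perm (Subtype p)}
    (h : Commute (g.subtypePerm hg) z) : Commute g (ofSubtype z) := by
  ext x
  by_cases hx : p x
  · have := congrArg (fun f : Perm (Subtype p) => (f ⟨x, hx⟩ : α)) h.eq
    simpa [ofSubtype_apply_of_mem _ hx, ofSubtype_apply_of_mem _ ((hg x).mpr hx)] using this
  · simp [ofSubtype_apply_of_not_mem _ hx, ofSubtype_apply_of_not_mem _ (mt (hg x).mp hx)]

theorem prime_dvd_ncard_of_pow_eq_one {σ : Perm α} {q : ℕ} [Fact q.Prime] (hσ : σ ^ q = 1)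
    {s : Set α} [Finite s] (hs : ∀ x, σ x ∈ s ↔ x ∈ s) (hfix : ∀ x ∈ s, σ x ≠ x) :
    q ∣ s.ncard := by
  classical
  have := Fintype.ofFinite s
  by_contra hq
  obtain ⟨⟨x, hx⟩, hσx⟩ := exists_fixed_point_of_prime (n := 1) (σ := σ.subtypePerm hs)
    (by rwa [← Nat.card_eq_fintype_card, Nat.card_coe_set_eq])
    (by ext; simp [subtypePerm_pow, hσ])
  exact hfix x hx (congrArg Subtype.val hσx)

end Equiv.Perm

section

variable {G X : Type*} [Group G] [MulAction G X] [Finite G] {p : ℕ} [Fact p.Prime]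

-- Adding a set `A` strictly enlarges the fixer of the complement, which in a `p`-group
-- multiplies its order by at least `p`.
theorem IsPGroup.pow_card_le_card_fixingSubgroup (hG : IsPGroup p G)
    (S : Finset (Set X)) (hS : (S : Set (Set X)).PairwiseDisjoint id)
    (hmove : ∀ A ∈ S, ∃ g ∈ fixingSubgroup G Aᶜ, ∃ x ∈ A, g • x ≠ x) :
    p ^ S.card ≤ Nat.card (fixingSubgroup G (⋃₀ (S : Set (Set X)))ᶜ) := by
  classical
  induction S using Finset.induction_on with
  | empty => simpa using Nat.one_le_iff_ne_zero.mpr Nat.card_pos.ne'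
  | @insert A S hA ih =>
    rw [Finset.coe_insert] at hS ⊢
    obtain ⟨g, hg, x, hxA, hgx⟩ := hmove A (Finset.mem_insert_self A S)
    have hxS : x ∈ (⋃₀ (S : Set (Set X)))ᶜ := by
      rintro ⟨B, hB, hxB⟩
      exact Set.disjoint_left.mp (hS (Set.mem_insert A _) (Set.mem_insert_of_mem A hB)
        (fun h => hA (h ▸ hB))) hxA hxB
    have hlt : fixingSubgroup G (⋃₀ (S : Set (Set X)))ᶜ <
        fixingSubgroup G (⋃₀ (insert A (S : Set (Set X))))ᶜ := by
      refine SetLike.lt_iff_le_and_exists.mpr ⟨fixingSubgroup_antitone G X ?_, g, ?_, ?_⟩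
      · exact Set.compl_subset_compl.mpr (Set.sUnion_mono (Set.subset_insert A _))
      · exact fixingSubgroup_antitone G X
          (Set.compl_subset_compl.mpr (Set.subset_sUnion_of_mem (Set.mem_insert A _))) hg
      · exact fun hgS => hgx (mem_fixingSubgroup_iff G |>.mp hgS x hxS)
    calc p ^ (insert A S).card = p * p ^ S.card := by
          rw [Finset.card_insert_of_notMem hA, pow_succ, mul_comm]
      _ ≤ p * Nat.card (fixingSubgroup G (⋃₀ (S : Set (Set X)))ᶜ) :=
          Nat.mul_le_mul_left p (ih (hS.subset (Set.subset_insert _ _))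
            fun B hB => hmove B (Finset.mem_insert_of_mem hB))
      _ ≤ _ := (hG.to_subgroup _).mul_card_le_card_of_lt hlt

theorem IsPGroup.sum_ncard_orbits_le (hG : IsPGroup p G) (S : Finset (Set X))
    (horbit : ∀ A ∈ S, ∃ x, orbit G x = A)
    (hmove : ∀ A ∈ S, ∃ g ∈ fixingSubgroup G Aᶜ, ∃ x ∈ A, g • x ≠ x) :
    ∑ A ∈ S, A.ncard ≤ Nat.card G := by
  classical
  rcases S.eq_empty_or_nonempty with rfl | hne
  · simp
  obtain ⟨_, hx, hmax⟩ := S.exists_max_image Set.ncard hne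
  obtain ⟨x, rfl⟩ := horbit _ hx
  have hdisj : (S : Set (Set X)).PairwiseDisjoint id :=
    orbit.pairwiseDisjoint.subset fun A hA => horbit A hA
  have hstab : p ^ (S.card - 1) ≤ Nat.card (stabilizer G x) := by
    rw [← Finset.card_erase_of_mem hx]
    refine (hG.pow_card_le_card_fixingSubgroup _ (hdisj.subset (by simp))
      fun A hA => hmove A (Finset.mem_of_mem_erase hA)).trans (Subgroup.card_le_of_le ?_)
    intro g hg
    refine (mem_fixingSubgroup_iff G).mp hg x ?_
    rintro ⟨A, hA, hxA⟩
    obtain ⟨hAx, hAS⟩ := Finset.mem_erase.mp hA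
    exact Set.disjoint_left.mp (hdisj hx hAS (Ne.symm hAx)) (mem_orbit_self x) hxA
  have hcard : S.card ≤ p ^ (S.card - 1) := by
    have := Nat.lt_pow_self (n := S.card - 1) (Fact.out : p.Prime).one_lt
    omega
  calc ∑ A ∈ S, A.ncard ≤ S.card * (orbit G x).ncard := Finset.sum_le_card_nsmul _ _ _ hmax
    _ ≤ Nat.card (stabilizer G x) * (stabilizer G x).index := by
        rw [index_stabilizer]
        exact Nat.mul_le_mul_right _ (hcard.trans hstab)
    _ = Nat.card G := Subgroup.card_mul_index _

theorem IsPGroup.card_sub_card_fixedPoints_le [Finite X] (hG : IsPGroup p G)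
    (hmove : ∀ x ∉ fixedPoints G X,
      ∃ g ∈ fixingSubgroup G (orbit G x)ᶜ, ∃ y ∈ orbit G x, g • y ≠ y) :
    Nat.card X - Nat.card (fixedPoints G X) ≤ Nat.card G := by
  classical
  have := Fintype.ofFinite X
  set moved := (fixedPoints G X)ᶜ.toFinset
  calc Nat.card X - Nat.card (fixedPoints G X) = moved.card := by
        rw [Nat.card_coe_set_eq, ← Set.ncard_compl, Set.ncard_eq_toFinset_card']
    _ = ∑ A ∈ moved.image (orbit G ·), {x ∈ moved | orbit G x = A}.card :=
        Finset.card_eq_sum_card_image _ _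
    _ ≤ ∑ A ∈ moved.image (orbit G ·), A.ncard := by
        refine Finset.sum_le_sum fun A _ => ?_
        rw [← Set.ncard_coe_finset]
        refine Set.ncard_le_ncard (fun x hx => ?_)
        rw [Finset.mem_coe, Finset.mem_filter] at hx
        exact hx.2 ▸ mem_orbit_self x
    _ ≤ Nat.card G := by
        refine hG.sum_ncard_orbits_le _ (by simp) fun A hA => ?_
        obtain ⟨x, hx, rfl⟩ := Finset.mem_image.mp hA
        exact hmove x (by simpa [moved] using hx)

end

namespace Subgroup

variable {X : Type*} (P : Subgroup (Perm X))

def orbitPreserving : Subgroup (Perm X) where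
  carrier := {σ | ∀ x, σ x ∈ orbit P x}
  one_mem' x := mem_orbit_self x
  mul_mem' {σ τ} hσ hτ x := by
    simpa only [Perm.mul_apply, orbit_eq_iff.mpr (hτ x)] using hσ (τ x)
  inv_mem' {σ} hσ x := by
    rw [mem_orbit_symm, ← orbit_eq_iff.mpr (hσ (σ⁻¹ x))]
    simp

def orbitwiseCentralizer : Subgroup (Perm X) :=
  centralizer (P : Set (Perm X)) ⊓ P.orbitPreserving

variable {P}

theorem le_orbitPreserving : P ≤ P.orbitPreserving :=
  fun σ hσ _ => ⟨⟨σ, hσ⟩, rfl⟩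

theorem apply_mem_orbit_iff_of_mem_orbitPreserving {σ : Perm X} (hσ : σ ∈ P.orbitPreserving)
    {x y : X} : σ y ∈ orbit P x ↔ y ∈ orbit P x := by
  rw [← orbit_eq_iff, ← orbit_eq_iff, orbit_eq_iff.mpr (hσ y)]

theorem apply_mem_orbit_of_mem_normalizer {g : Perm X} (hg : g ∈ normalizer (P : Set (Perm X)))
    {x y : X} (hy : y ∈ orbit P x) : g y ∈ orbit P (g x) := by
  obtain ⟨h, rfl⟩ := hy
  refine ⟨⟨g * h * g⁻¹, (mem_normalizer_iff.mp hg h).mp h.2⟩, ?_⟩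
  simp [Subgroup.smul_def, Perm.smul_def]

theorem apply_eq_self_of_mem_centralizer {σ : Perm X} (hσ : σ ∈ centralizer (P : Set (Perm X)))
    {x y : X} (hx : σ x = x) (hy : y ∈ orbit P x) : σ y = y := by
  obtain ⟨h, rfl⟩ := hy
  have := congrArg (· x) (mem_centralizer_iff.mp hσ h h.2)
  simp only [Perm.mul_apply, hx] at this
  simpa [Subgroup.smul_def, Perm.smul_def] using this.symm

theorem orbitwiseCentralizer_le_normalizer :
    P.orbitwiseCentralizer ≤ normalizer (P : Set (Perm X)) :=
  inf_le_left.trans (centralizer_le_normalizer _)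

theorem conj_mem_orbitwiseCentralizer {g : Perm X} (hg : g ∈ normalizer (P : Set (Perm X)))
    {σ : Perm X} (hσ : σ ∈ P.orbitwiseCentralizer) :
    g * σ * g⁻¹ ∈ P.orbitwiseCentralizer := by
  refine ⟨mem_centralizer_iff.mpr fun h hh => ?_, fun x => ?_⟩
  · have hh' : g⁻¹ * h * g ∈ P := by
      simpa using (mem_normalizer_iff.mp (inv_mem hg) h).mp hh
    have := mem_centralizer_iff.mp hσ.1 _ hh'
    calc h * (g * σ * g⁻¹) = g * ((g⁻¹ * h * g) * σ) * g⁻¹ := by group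
      _ = g * (σ * (g⁻¹ * h * g)) * g⁻¹ := by rw [this]
      _ = g * σ * g⁻¹ * h := by group
  · simpa using apply_mem_orbit_of_mem_normalizer hg (hσ.2 (g⁻¹ x))

theorem isPGroup_orbitwiseCentralizer [Finite X] {p : ℕ} [hp : Fact p.Prime]
    (hP : IsPGroup p P) : IsPGroup p P.orbitwiseCentralizer := by
  rw [isPGroup_iff_primeFactors_card_subset hp.out.ne_zero, hp.out.primeFactors]
  intro q hq
  obtain ⟨hq, hqD, -⟩ := Nat.mem_primeFactors.mp hq
  have := Fact.mk hq
  obtain ⟨⟨τ, hτ⟩, hτq⟩ := exists_prime_orderOf_dvd_card' q hqD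
  replace hτq : orderOf τ = q := (orderOf_coe (⟨τ, hτ⟩ : P.orbitwiseCentralizer)).trans hτq
  obtain ⟨y, hy⟩ : ∃ y, τ y ≠ y := by
    by_contra! h
    rw [show τ = 1 from Perm.ext h, orderOf_one] at hτq
    exact hq.one_lt.ne hτq
  have hdvd : q ∣ (orbit P y).ncard :=
    Perm.prime_dvd_ncard_of_pow_eq_one (hτq ▸ pow_orderOf_eq_one τ)
      (fun _ => apply_mem_orbit_iff_of_mem_orbitPreserving hτ.2)
      fun w hw hτw => hy (apply_eq_self_of_mem_centralizer hτ.1 hτw (mem_orbit_symm.mp hw))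
  obtain ⟨n, hn⟩ := hP.card_orbit y
  rw [Nat.card_coe_set_eq] at hn
  exact Finset.mem_singleton.mpr
    ((Nat.prime_dvd_prime_iff_eq hq hp.out).mp (hq.dvd_of_dvd_pow (hn ▸ hdvd)))

theorem exists_mem_orbitwiseCentralizer_moving_orbit [Finite X] {p : ℕ} [Fact p.Prime]
    (hP : IsPGroup p P) {x : X} {g : Perm X} (hg : g ∈ P) (hgx : g x ≠ x) :
    ∃ c ∈ P.orbitwiseCentralizer, (∀ y ∉ orbit P x, c y = y) ∧ ∃ y ∈ orbit P x, c y ≠ y := by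
  classical
  let φ := toPermHom P (orbit P x)
  have hR : IsPGroup p φ.range := hP.of_surjective φ.rangeRestrict φ.rangeRestrict_surjective
  have hne : φ.range ≠ ⊥ := fun h =>
    hgx (congrArg (fun f : Perm (orbit P x) => (f ⟨x, mem_orbit_self x⟩ : X))
      ((Subgroup.eq_bot_iff_forall _).mp h _ ⟨⟨g, hg⟩, rfl⟩))
  obtain ⟨z, -, hz1, hz⟩ := hR.exists_ne_one_forall_commute hne
  refine ⟨Perm.ofSubtype z, ⟨mem_centralizer_iff.mpr fun h hh => ?_, fun y => ?_⟩,
    fun y hy => Perm.ofSubtype_apply_of_not_mem z hy, ?_⟩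
  · have hφ : h.subtypePerm (fun _ => apply_mem_orbit_iff_of_mem_orbitPreserving
        (le_orbitPreserving hh)) = φ ⟨h, hh⟩ := rfl
    exact (Perm.commute_ofSubtype _ (hφ ▸ hz _ ⟨⟨h, hh⟩, rfl⟩)).eq
  · by_cases hy : y ∈ orbit P x
    · rw [orbit_eq_iff.mpr hy]
      exact (Perm.ofSubtype_apply_mem_iff_mem z y).mpr hy
    · rw [Perm.ofSubtype_apply_of_not_mem z hy]
      exact mem_orbit_self y
  · obtain ⟨w, hw⟩ : ∃ w, z w ≠ w := by
      by_contra! h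
      exact hz1 (Perm.ext h)
    exact ⟨w, w.2, by rw [Perm.ofSubtype_apply_coe]; exact fun h => hw (Subtype.ext h)⟩

end Subgroup

theorem stmt7_general (p : ℕ) (hp : p.Prime) (X : Type*) [Fintype X]
    (P : Subgroup (Equiv.Perm X))
    (hpgrp : IsPGroup p P)
    (hrad : ∀ Q : Subgroup (Equiv.Perm X), IsPGroup p Q → Q ≤ Subgroup.normalizer (P : Set (Equiv.Perm X)) →
      (∀ g ∈ Subgroup.normalizer (P : Set (Equiv.Perm X)), ∀ q ∈ Q, g * q * g⁻¹ ∈ Q) → Q ≤ P) :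
    Fintype.card X - Nat.card {x : X // ∀ σ ∈ P, σ x = x} ≤ Nat.card P := by
  have := Fact.mk hp
  have hD : P.orbitwiseCentralizer ≤ P :=
    hrad _ (P.isPGroup_orbitwiseCentralizer hpgrp) P.orbitwiseCentralizer_le_normalizer
      fun g hg σ hσ => P.conj_mem_orbitwiseCentralizer hg hσ
  have hfixed : Nat.card {x : X // ∀ σ ∈ P, σ x = x} = Nat.card (fixedPoints P X) :=
    Nat.card_congr (Equiv.subtypeEquivRight fun x => by simp [Subgroup.smul_def, Perm.smul_def])
  rw [Fintype.card_eq_nat_card, hfixed]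
  refine hpgrp.card_sub_card_fixedPoints_le fun x hx => ?_
  obtain ⟨g, hgx⟩ : ∃ g : P, g • x ≠ x := by simpa using hx
  obtain ⟨c, hc, hcfix, y, hy, hcy⟩ :=
    P.exists_mem_orbitwiseCentralizer_moving_orbit hpgrp g.2 hgx
  exact ⟨⟨c, hD hc⟩, (mem_fixingSubgroup_iff P).mpr fun z hz => hcfix z hz, y, hy, hcy⟩

/-- If P is a p-radical subgroup of the symmetric group on a finite set X with n elements
(i.e. P is a p-subgroup with P = O_p(N(P)): every p-subgroup of the normalizer of P that
is normal in the normalizer is contained in P), then |P| ≥ n − |X^P|. -/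
theorem stmt7 (p : ℕ) (hp : p.Prime) (X : Type*) [Fintype X] [DecidableEq X]
    (P : Subgroup (Equiv.Perm X))
    (hpgrp : IsPGroup p P)
    (hrad : ∀ Q : Subgroup (Equiv.Perm X), IsPGroup p Q → Q ≤ Subgroup.normalizer (P : Set (Equiv.Perm X)) →
      (∀ g ∈ Subgroup.normalizer (P : Set (Equiv.Perm X)), ∀ q ∈ Q, g * q * g⁻¹ ∈ Q) → Q ≤ P) :
    Fintype.card X - Nat.card {x : X // ∀ σ ∈ P, σ x = x} ≤ Nat.card P :=
  stmt7_general p hp X P hpgrp hrad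
end

section
/- Let p be a prime and let X be a finite set with n elements. Suppose 1 = P_0 ⊊ P_1 ⊊ P_2 ⊊ … ⊊ P_k ⊆ Σ_X is a radical p-chain of length k ≥ 2 in the symmetric group Σ_X. Then either |P_k| > n, or p = 2, n = 5, k = 2, and there exist two disjoint transpositions a, b ∈ Σ_X such that P_1 is the subgroup generated by a and P_2 is the subgroup generated by a and b. -/
/-- `IsPCoreOf p N O` says that O is the largest normal p-subgroup O_p(N) of the subgroup N
(viewed inside an ambient group G): O ≤ N, O is a p-group, O is normal in N, and every
p-subgroup of N that is normal in N is contained in O. -/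
def IsPCoreOf (p : ℕ) {G : Type*} [Group G] (N O : Subgroup G) : Prop :=
  O ≤ N ∧ IsPGroup p O ∧ (∀ g ∈ N, ∀ x ∈ O, g * x * g⁻¹ ∈ O) ∧
    ∀ Q : Subgroup G, Q ≤ N → IsPGroup p Q →
      (∀ g ∈ N, ∀ x ∈ Q, g * x * g⁻¹ ∈ Q) → Q ≤ O

/-- `IsSylowIn p N S` says that S is a Sylow p-subgroup of the subgroup N (viewed inside an
ambient group G): S is a p-subgroup of N which is maximal among p-subgroups of N. -/
def IsSylowIn (p : ℕ) {G : Type*} [Group G] (N S : Subgroup G) : Prop :=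
  S ≤ N ∧ IsPGroup p S ∧
    ∀ Q : Subgroup G, Q ≤ N → IsPGroup p Q → S ≤ Q → Q = S

/-!
Write `K = P_{k-1}`, `N = N(P_0) ∩ … ∩ N(P_{k-1})` and `S = P_k`. Going up the chain, each `P_i`
(`i ≤ k - 1`) is the direct product of its restrictions to its orbits: the permutations that agree
on every orbit with an element of `P_i` form a `p`-group whose intersection with `N(P_i)` is a
normal `p`-subgroup of `N(P_0) ∩ … ∩ N(P_i)`, hence lies in `P_i`, and the normalizer condition
in that `p`-group forces equality. So `K` has at least as many elements as the number `t` of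
points it moves, and `p ≤ t`. The symmetric group `T` on the `f` fixed points of `K` centralizes
the chain, is normal in `N` and meets `K` trivially, so `S ∩ T` contains a Sylow subgroup of `T`.
Thus `|S| ≥ |K| |S ∩ T| ≥ t p ^ (f / p)` and `|S| ≥ p |K| ≥ p t`, and `|S| ≤ n = t + f` forces
`p = 2`, `f ∈ {2, 3}`. For `f = 2`, `T` would be a normal `2`-subgroup of `N` outside `K`; so
`f = 3`, `t = 2`, `|S| = 4`, and `K`, `S ∩ T` are generated by disjoint transpositions. Finally
`|P_i| ≥ 2 ^ i` gives `k = 2`.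
-/

namespace Subgroup

variable {G : Type*} [Group G]

theorem le_normalizer_of_conj_mem {H K : Subgroup G}
    (h : ∀ g ∈ K, ∀ x ∈ H, g * x * g⁻¹ ∈ H) : K ≤ normalizer H := fun g hg =>
  mem_normalizer_iff.mpr fun x => ⟨h g hg x, fun hx => by
    simpa [mul_assoc] using h g⁻¹ (inv_mem hg) _ hx⟩

theorem card_subgroupOf_of_le {H K : Subgroup G} (h : H ≤ K) :
    Nat.card (H.subgroupOf K) = Nat.card H :=
  Nat.card_congr (subgroupOfEquivOfLe h).toEquiv

theorem relIndex_sup_left_of_normal [Finite G] (H K : Subgroup G) [K.Normal] :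
    H.relIndex (H ⊔ K) = H.relIndex K := by
  have hH := relIndex_inf_mul_relIndex H K (H ⊔ K)
  have hK := relIndex_inf_mul_relIndex K H (H ⊔ K)
  rw [inf_of_le_left le_sup_right, relIndex_sup_right] at hH
  rw [inf_of_le_left le_sup_left, inf_comm, ← hH, mul_comm] at hK
  exact Nat.eq_of_mul_eq_mul_right (Nat.pos_of_ne_zero index_ne_zero_of_finite) hK

theorem card_mul_card_le_of_disjoint [Finite G] {H K L : Subgroup G} (hHL : H ≤ L) (hKL : K ≤ L)
    (hHK : Disjoint H K) : Nat.card H * Nat.card K ≤ Nat.card L := by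
  rw [← Nat.card_prod]
  refine Nat.card_le_card_of_injective
    (fun g => ⟨g.1 * g.2, mul_mem (hHL g.1.2) (hKL g.2.2)⟩) fun g g' h => ?_
  exact mul_injective_of_disjoint hHK (congrArg Subtype.val h)

end Subgroup

namespace IsPGroup

variable {G : Type*} [Group G] [Finite G] {p : ℕ} [Fact p.Prime]

theorem mul_card_le_card_of_lt_s8 {H K : Subgroup G} (hK : IsPGroup p K) (hHK : H < K) :
    p * Nat.card H ≤ Nat.card K := by
  obtain ⟨a, ha⟩ := (hK.to_le hHK.le).exists_card_eq
  obtain ⟨b, hb⟩ := hK.exists_card_eq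
  have hp := (Fact.out : p.Prime)
  have hab : a < b := by
    refine lt_of_le_of_ne ?_ fun hab => hHK.ne (Subgroup.eq_of_le_of_card_ge hHK.le ?_)
    · have := Subgroup.card_dvd_of_le hHK.le
      rwa [ha, hb, Nat.pow_dvd_pow_iff_le_right hp.one_lt] at this
    · rw [ha, hb, hab]
  rw [ha, hb, ← pow_succ']
  exact Nat.pow_le_pow_right hp.pos hab

theorem pow_le_card_of_strictMono {k : ℕ} {P : Fin (k + 1) → Subgroup G} (hP : StrictMono P)
    (hp : ∀ i, IsPGroup p (P i)) (i : Fin (k + 1)) : p ^ (i : ℕ) ≤ Nat.card (P i) := by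
  induction i using Fin.induction with
  | zero => exact Nat.card_pos
  | succ i ih =>
    rw [Fin.val_succ, pow_succ']
    exact (Nat.mul_le_mul_left p ih).trans
      ((hp _).mul_card_le_card_of_lt_s8 (hP i.castSucc_lt_succ))

theorem lt_normalizer_inf {H P : Subgroup G} (hP : IsPGroup p P) (hHP : H < P) :
    H < Subgroup.normalizer H ⊓ P := by
  have : Group.IsNilpotent P := hP.isNilpotent
  have hlt : H.subgroupOf P < ⊤ := by
    rw [lt_top_iff_ne_top, Ne, Subgroup.subgroupOf_eq_top]
    exact hHP.not_ge
  have := Group.normalizerCondition_of_isNilpotent _ hlt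
  rwa [← Subgroup.subgroupOf_normalizer_eq hHP.le, ← Subgroup.map_subtype_lt_map_subtype,
    Subgroup.subgroupOf_map_subtype, Subgroup.subgroupOf_map_subtype,
    inf_of_le_left hHP.le] at this

end IsPGroup

theorem Sylow.pow_dvd_card_inf_of_normal {G : Type*} [Group G] [Finite G] {p : ℕ} [Fact p.Prime]
    (P : Sylow p G) {K : Subgroup G} [K.Normal] {q : ℕ} (hq : p ^ q ∣ Nat.card K) :
    p ^ q ∣ Nat.card (P ⊓ K : Subgroup G) := by
  have hcard : Nat.card (P ⊓ K : Subgroup G) * P.relIndex K = Nat.card K := by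
    rw [← Subgroup.relIndex_bot_left, ← Subgroup.relIndex_bot_left,
      ← Subgroup.inf_relIndex_right (P : Subgroup G) K]
    exact Subgroup.relIndex_mul_relIndex _ _ _ bot_le inf_le_right
  have hcop : ¬ p ∣ P.relIndex K := by
    rw [← Subgroup.relIndex_sup_left_of_normal]
    exact fun h => P.not_dvd_index (h.trans (Subgroup.relIndex_dvd_index_of_le le_sup_left))
  rw [← hcard] at hq
  exact ((Nat.Coprime.pow_left q
    ((Nat.Prime.coprime_iff_not_dvd Fact.out).mpr hcop))).dvd_of_dvd_mul_right hq

namespace IsSylowIn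

variable {p : ℕ} {G : Type*} [Group G] {N S : Subgroup G}

def toSylow (h : IsSylowIn p N S) : Sylow p N where
  toSubgroup := S.subgroupOf N
  isPGroup' := h.2.1.of_equiv (Subgroup.subgroupOfEquivOfLe h.1).symm
  is_maximal' {Q} hQ hSQ := by
    rw [← Subgroup.map_subtype_inj, Subgroup.subgroupOf_map_subtype, inf_of_le_left h.1]
    refine h.2.2 _ (Subgroup.map_subtype_le Q) (hQ.map _) ?_
    simpa [Subgroup.subgroupOf_map_subtype, inf_of_le_left h.1] using
      Subgroup.map_mono (f := N.subtype) hSQ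

theorem pow_dvd_card_inf [Finite G] [Fact p.Prime] (h : IsSylowIn p N S) {T : Subgroup G}
    (hTN : T ≤ N) (hT : ∀ g ∈ N, ∀ x ∈ T, g * x * g⁻¹ ∈ T) {q : ℕ}
    (hq : p ^ q ∣ Nat.card T) :
    p ^ q ∣ Nat.card (S ⊓ T : Subgroup G) := by
  have : (T.subgroupOf N).Normal := ⟨fun x hx g => hT g g.2 x hx⟩
  have := h.toSylow.pow_dvd_card_inf_of_normal (K := T.subgroupOf N) (q := q) (by
    rwa [Subgroup.card_subgroupOf_of_le hTN])
  change p ^ q ∣ Nat.card ((S ⊓ T).subgroupOf N) at this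
  rwa [Subgroup.card_subgroupOf_of_le (inf_le_right.trans hTN)] at this

end IsSylowIn

theorem Nat.Prime.pow_div_dvd_factorial {p : ℕ} (hp : p.Prime) (n : ℕ) :
    p ^ (n / p) ∣ n.factorial := by
  rw [hp.pow_dvd_factorial_iff (b := Nat.log p n + 2) (by omega)]
  simpa using Finset.single_le_sum (f := fun i => n / p ^ i) (fun _ _ => Nat.zero_le _)
    (show 1 ∈ Finset.Ico 1 (Nat.log p n + 2) by simp)

theorem Nat.eq_two_of_mul_pow_div_le {p t f : ℕ} (hp : 2 ≤ p) (hpt : p ≤ t)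
    (h1 : t * p ^ (f / p) ≤ t + f) (h2 : p * t ≤ t + f) : p = 2 ∧ f / 2 = 1 ∧ t ≤ f := by
  set q := f / p
  have hf : f < p * (q + 1) := Nat.lt_mul_div_succ f (by omega)
  have htf : t ≤ f := by nlinarith
  have hq1 : 1 ≤ q := Nat.div_pos (by omega) (by omega)
  have hpq : p * q ≤ p ^ q := Nat.mul_le_pow (by omega) q
  have hpow : p ^ q ≤ q + 1 := by nlinarith
  have hp2 : p = 2 := by nlinarith
  subst hp2
  refine ⟨rfl, ?_, htf⟩
  show q = 1
  nlinarith

open Equiv MulAction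

section PermutationGroup

variable {X : Type*}

theorem mem_fixedPoints_subgroup_iff {H : Subgroup (Perm X)} {x : X} :
    x ∈ fixedPoints H X ↔ ∀ g ∈ H, g x = x := by
  simp [MulAction.mem_fixedPoints, Subgroup.smul_def, Perm.smul_def]

theorem mem_orbit_subgroup_iff {H : Subgroup (Perm X)} {x y : X} :
    y ∈ orbit H x ↔ ∃ g ∈ H, g x = y := by
  simp [MulAction.mem_orbit_iff, Subgroup.smul_def, Perm.smul_def]

theorem apply_mem_orbit_subgroup {H : Subgroup (Perm X)} {g : Perm X} (hg : g ∈ H) {x y : X}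
    (hy : y ∈ orbit H x) : g y ∈ orbit H x :=
  mem_orbit_of_mem_orbit (⟨g, hg⟩ : H) hy

theorem orbit_subgroup_mono {H J : Subgroup (Perm X)} (hHJ : H ≤ J) (x : X) :
    orbit H x ⊆ orbit J x := fun y hy => by
  obtain ⟨g, hg, rfl⟩ := mem_orbit_subgroup_iff.mp hy
  exact mem_orbit_subgroup_iff.mpr ⟨g, hHJ hg, rfl⟩

theorem apply_mem_orbit_apply_of_mem_normalizer {J : Subgroup (Perm X)} {g : Perm X}
    (hg : g ∈ Subgroup.normalizer J) {x y : X} (hy : y ∈ orbit J x) :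
    g y ∈ orbit J (g x) := by
  obtain ⟨v, hv, rfl⟩ := mem_orbit_subgroup_iff.mp hy
  exact mem_orbit_subgroup_iff.mpr
    ⟨g * v * g⁻¹, (Subgroup.mem_normalizer_iff.mp hg v).mp hv, by simp⟩

theorem Set.EqOn.perm_inv_of_mem {J : Subgroup (Perm X)} {g h : Perm X} (hg : g ∈ J) {x : X}
    (hhg : Set.EqOn h g (orbit J x)) : Set.EqOn ⇑h⁻¹ ⇑g⁻¹ (orbit J x) := fun y hy => by
  rw [Perm.inv_eq_iff_eq, hhg (apply_mem_orbit_subgroup (inv_mem hg) hy)]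
  exact (g.apply_symm_apply y).symm

theorem Set.EqOn.perm_pow_of_mem {J : Subgroup (Perm X)} {g h : Perm X} (hg : g ∈ J) {x : X}
    (hhg : Set.EqOn h g (orbit J x)) (m : ℕ) : Set.EqOn ⇑(h ^ m) ⇑(g ^ m) (orbit J x) := by
  induction m with
  | zero => exact fun _ _ => rfl
  | succ m ih =>
    intro y hy
    rw [pow_succ, pow_succ, Perm.mul_apply, Perm.mul_apply, hhg hy,
      ih (apply_mem_orbit_subgroup hg hy)]

/-- The direct product of the restrictions of `J` to its orbits. -/
def orbitProduct (J : Subgroup (Perm X)) : Subgroup (Perm X) where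
  carrier := {h | ∀ x, ∃ g ∈ J, Set.EqOn h g (orbit J x)}
  one_mem' _ := ⟨1, one_mem J, fun _ _ => rfl⟩
  mul_mem' {h₁ h₂} hh₁ hh₂ x := by
    obtain ⟨g₁, hg₁, h₁g₁⟩ := hh₁ x
    obtain ⟨g₂, hg₂, h₂g₂⟩ := hh₂ x
    refine ⟨g₁ * g₂, mul_mem hg₁ hg₂, fun y hy => ?_⟩
    rw [Perm.mul_apply, Perm.mul_apply, h₂g₂ hy, h₁g₁ (apply_mem_orbit_subgroup hg₂ hy)]
  inv_mem' {h} hh x := by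
    obtain ⟨g, hg, hhg⟩ := hh x
    exact ⟨g⁻¹, inv_mem hg, hhg.perm_inv_of_mem hg⟩

theorem le_orbitProduct (J : Subgroup (Perm X)) : J ≤ orbitProduct J :=
  fun g hg _ => ⟨g, hg, fun _ _ => rfl⟩

theorem IsPGroup.orbitProduct [Finite X] {p : ℕ} [Fact p.Prime] {J : Subgroup (Perm X)}
    (hJ : IsPGroup p J) : IsPGroup p (orbitProduct J) := by
  obtain ⟨n, hn⟩ := hJ.exists_card_eq
  refine fun h => ⟨n, Subtype.ext (Perm.ext fun x => ?_)⟩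
  obtain ⟨g, hg, hhg⟩ := h.2 x
  have hgn : g ^ p ^ n = 1 := by
    simpa [hn] using congrArg Subtype.val (pow_card_eq_one' (G := J) (x := ⟨g, hg⟩))
  simpa [hgn] using hhg.perm_pow_of_mem hg (p ^ n) (mem_orbit_self x)

theorem normalizer_le_normalizer_orbitProduct (J : Subgroup (Perm X)) :
    Subgroup.normalizer J ≤ Subgroup.normalizer (orbitProduct J : Set (Perm X)) := by
  refine Subgroup.le_normalizer_of_conj_mem fun g hg h hh x => ?_
  obtain ⟨w, hw, hhw⟩ := hh (g⁻¹ x)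
  refine ⟨g * w * g⁻¹, (Subgroup.mem_normalizer_iff.mp hg w).mp hw, fun y hy => ?_⟩
  have hy' : g⁻¹ y ∈ orbit J (g⁻¹ x) :=
    apply_mem_orbit_apply_of_mem_normalizer (inv_mem hg) hy
  simp only [Perm.mul_apply, hhw hy']

theorem orbitProduct_le_normalizer {H J : Subgroup (Perm X)} (hHJ : H ≤ J)
    (hH : orbitProduct H ≤ H) (hJH : J ≤ Subgroup.normalizer H) :
    orbitProduct J ≤ Subgroup.normalizer H := by
  refine Subgroup.le_normalizer_of_conj_mem fun h hh u hu => hH fun x => ?_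
  obtain ⟨g, hg, hhg⟩ := hh x
  refine ⟨g * u * g⁻¹, (Subgroup.mem_normalizer_iff.mp (hJH hg) u).mp hu, fun y hy => ?_⟩
  have hy' := orbit_subgroup_mono hHJ x hy
  have hu' : u (g⁻¹ y) ∈ orbit J x :=
    apply_mem_orbit_subgroup (hHJ hu) (apply_mem_orbit_subgroup (inv_mem hg) hy')
  simp only [Perm.mul_apply, hhg.perm_inv_of_mem hg hy', hhg hu']

theorem orbitProduct_le_of_isPCoreOf [Finite X] {p : ℕ} [Fact p.Prime] {J N : Subgroup (Perm X)}
    (hJ : IsPCoreOf p N J) (hNJ : N ≤ Subgroup.normalizer J)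
    (hN : orbitProduct J ⊓ Subgroup.normalizer J ≤ N) : orbitProduct J ≤ J := by
  obtain ⟨-, hJp, -, hmax⟩ := hJ
  have hR : orbitProduct J ⊓ Subgroup.normalizer J ≤ J := by
    refine hmax _ hN (hJp.orbitProduct.to_le inf_le_left) fun g hg x hx => ?_
    obtain ⟨hx₁, hx₂⟩ := Subgroup.mem_inf.mp hx
    refine Subgroup.mem_inf.mpr ⟨?_, mul_mem (mul_mem (hNJ hg) hx₂) (inv_mem (hNJ hg))⟩
    exact (Subgroup.mem_normalizer_iff.mp
      (normalizer_le_normalizer_orbitProduct J (hNJ hg)) x).mp hx₁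
  by_contra hne
  have hlt := hJp.orbitProduct.lt_normalizer_inf (lt_of_le_not_ge (le_orbitProduct J) hne)
  exact hlt.not_ge (inf_comm (orbitProduct J) _ ▸ hR)

theorem orbitProduct_le_of_isPCoreOf_iInf [Finite X] {p : ℕ} [Fact p.Prime] {ι : Type*}
    [PartialOrder ι] [WellFoundedLT ι] {P : ι → Subgroup (Perm X)} (hP : Monotone P) (i : ι)
    (hcore : ∀ j ≤ i,
      IsPCoreOf p (⨅ (l : ι) (_ : l ≤ j), Subgroup.normalizer (P l : Set (Perm X))) (P j)) :
    orbitProduct (P i) ≤ P i := by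
  induction i using WellFoundedLT.induction with
  | _ i ih =>
  have hN : ∀ j ≤ i, (⨅ (l : ι) (_ : l ≤ i), Subgroup.normalizer (P l : Set (Perm X))) ≤
      Subgroup.normalizer (P j : Set (Perm X)) := fun j hj =>
    iInf₂_le (f := fun l (_ : l ≤ i) => Subgroup.normalizer (P l : Set (Perm X))) j hj
  refine orbitProduct_le_of_isPCoreOf (hcore i le_rfl) (hN i le_rfl) (le_iInf₂ fun j hj => ?_)
  rcases hj.lt_or_eq with hji | rfl
  · exact inf_le_left.trans (orbitProduct_le_normalizer (hP hj)
      (ih j hji fun l hl => hcore l (hl.trans hj)) ((hcore i le_rfl).1.trans (hN j hj)))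
  · exact inf_le_right

theorem exists_mem_fixingSubgroup_compl_orbit_apply_eq {H : Subgroup (Perm X)}
    (hH : orbitProduct H ≤ H) {x y : X} (hy : y ∈ orbit H x) :
    ∃ s ∈ H ⊓ fixingSubgroup (Perm X) (orbit H x)ᶜ, s x = y := by
  classical
  obtain ⟨g, hg, rfl⟩ := mem_orbit_subgroup_iff.mp hy
  have hgO : ∀ z, g z ∈ orbit H x ↔ z ∈ orbit H x := fun z =>
    ⟨fun hz => by simpa using apply_mem_orbit_subgroup (inv_mem hg) hz,
      apply_mem_orbit_subgroup hg⟩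
  set s := Perm.ofSubtype (g.subtypePerm hgO)
  have hs_out : ∀ z ∉ orbit H x, s z = z := fun z hz =>
    Perm.ofSubtype_subtypePerm_of_not_mem hgO hz
  refine ⟨s, Subgroup.mem_inf.mpr
    ⟨hH fun z => ?_, (mem_fixingSubgroup_iff (Perm X)).mpr hs_out⟩,
    Perm.ofSubtype_subtypePerm_of_mem hgO (mem_orbit_self x)⟩
  by_cases hz : z ∈ orbit H x
  · refine ⟨g, hg, fun w hw => Perm.ofSubtype_subtypePerm_of_mem hgO ?_⟩
    rwa [← orbit_eq_iff.mpr hz]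
  · refine ⟨1, one_mem H, fun w hw => hs_out w fun hwx => hz ?_⟩
    rw [← orbit_eq_iff.mpr hwx]
    exact mem_orbit_symm.mp hw

theorem ncard_orbit_le_card_fixingSubgroup [Finite X] {H : Subgroup (Perm X)}
    (hH : orbitProduct H ≤ H) (x : X) :
    (orbit H x).ncard ≤
      Nat.card (H ⊓ fixingSubgroup (Perm X) (orbit H x)ᶜ : Subgroup (Perm X)) := by
  rw [← Nat.card_coe_set_eq]
  refine Nat.card_le_card_of_surjective (fun s => ⟨s.1 x,
    apply_mem_orbit_subgroup (Subgroup.mem_inf.mp s.2).1 (mem_orbit_self x)⟩) ?_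
  rintro ⟨y, hy⟩
  obtain ⟨s, hs, rfl⟩ := exists_mem_fixingSubgroup_compl_orbit_apply_eq hH hy
  exact ⟨⟨s, hs⟩, rfl⟩

theorem one_lt_ncard_orbit [Finite X] {H : Subgroup (Perm X)} {x : X}
    (hx : x ∉ fixedPoints H X) : 1 < (orbit H x).ncard := by
  obtain ⟨g, hg, hgx⟩ : ∃ g ∈ H, g x ≠ x := by
    simpa [mem_fixedPoints_subgroup_iff] using hx
  exact (Set.one_lt_ncard (Set.toFinite _)).mpr
    ⟨g x, apply_mem_orbit_subgroup hg (mem_orbit_self x), x, mem_orbit_self x, hgx⟩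

theorem orbit_subset_sdiff_fixedPoints {H : Subgroup (Perm X)} {Y : Set X}
    (hY : ∀ y ∈ Y, orbit H y ⊆ Y) {x : X} (hx : x ∈ Y \ fixedPoints H X) :
    orbit H x ⊆ Y \ fixedPoints H X := fun _ hw =>
  ⟨hY x hx.1 hw, fun hwf => hx.2 (mem_fixedPoints'.mp hwf x (mem_orbit_symm.mp hw) ▸ hwf)⟩

theorem ncard_sdiff_fixedPoints_ne_one [Finite X] {H : Subgroup (Perm X)} {Y : Set X}
    (hY : ∀ y ∈ Y, orbit H y ⊆ Y) : (Y \ fixedPoints H X).ncard ≠ 1 := by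
  rcases (Y \ fixedPoints H X).eq_empty_or_nonempty with h | ⟨z, hz⟩
  · simp [h]
  · have := Set.ncard_le_ncard (orbit_subset_sdiff_fixedPoints hY hz)
    have := one_lt_ncard_orbit hz.2
    omega

theorem disjoint_fixingSubgroup_compl {s t : Set X} (hst : Disjoint s t) :
    Disjoint (fixingSubgroup (Perm X) sᶜ) (fixingSubgroup (Perm X) tᶜ) := by
  refine Subgroup.disjoint_def.mpr fun {g} hs ht => Perm.ext fun z => ?_
  by_cases hz : z ∈ s
  · exact (mem_fixingSubgroup_iff (Perm X)).mp ht z (Set.disjoint_left.mp hst hz)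
  · exact (mem_fixingSubgroup_iff (Perm X)).mp hs z hz

theorem ncard_sdiff_fixedPoints_le_card [Finite X] {H : Subgroup (Perm X)}
    (hH : orbitProduct H ≤ H) {Y : Set X} (hY : ∀ y ∈ Y, orbit H y ⊆ Y) :
    (Y \ fixedPoints H X).ncard ≤
      Nat.card (H ⊓ fixingSubgroup (Perm X) Yᶜ : Subgroup (Perm X)) := by
  induction hn : (Y \ fixedPoints H X).ncard using Nat.strong_induction_on generalizing Y with
  | _ n ih =>
  rcases (Y \ fixedPoints H X).eq_empty_or_nonempty with h | ⟨x, hx⟩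
  · rw [← hn, h, Set.ncard_empty]
    exact Nat.zero_le _
  -- Split off the orbit `O` of a moved point `x`: the elements of `H` supported on `O` and on
  -- `Y \ O` intersect trivially, those on `O` move `x` to every point of `O`, and
  -- `a + b ≤ a * b` once `a, b ≥ 2` (the rest `b` is `0` or at least `2`).
  have hOY : orbit H x ⊆ Y := hY x hx.1
  have hYO : ∀ y ∈ Y \ orbit H x, orbit H y ⊆ Y \ orbit H x := fun y hy w hw =>
    ⟨hY y hy.1 hw, fun hwO => hy.2 (orbit_eq_iff.mpr hwO ▸ mem_orbit_symm.mp hw)⟩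
  have hsplit : ((Y \ orbit H x) \ fixedPoints H X).ncard + (orbit H x).ncard = n := by
    rw [← hn, Set.sdiff_sdiff_comm]
    exact Set.ncard_sdiff_add_ncard_of_subset (orbit_subset_sdiff_fixedPoints hY hx)
  have hO := one_lt_ncard_orbit hx.2
  have hrest := ih _ (by omega) hYO rfl
  have hrest_ne_one := ncard_sdiff_fixedPoints_ne_one hYO
  have hprod := Subgroup.card_mul_card_le_of_disjoint
    (inf_le_inf_left H (fixingSubgroup_antitone (Perm X) X (Set.compl_subset_compl.mpr hOY)))
    (inf_le_inf_left H (fixingSubgroup_antitone (Perm X) X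
      (Set.compl_subset_compl.mpr Set.sdiff_subset)))
    ((disjoint_fixingSubgroup_compl Set.disjoint_sdiff_right).mono inf_le_right inf_le_right)
  have hOcard := ncard_orbit_le_card_fixingSubgroup hH x
  have hpos : 0 < Nat.card (H ⊓ fixingSubgroup (Perm X) (Y \ orbit H x)ᶜ : Subgroup (Perm X)) :=
    Nat.card_pos
  rcases Nat.eq_zero_or_pos ((Y \ orbit H x) \ fixedPoints H X).ncard with h0 | h2
  · nlinarith
  · nlinarith [Nat.add_le_mul (show 2 ≤ ((Y \ orbit H x) \ fixedPoints H X).ncard by omega) hO,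
      Nat.mul_le_mul hrest hOcard]

theorem ncard_compl_fixedPoints_le_card [Finite X] {H : Subgroup (Perm X)}
    (hH : orbitProduct H ≤ H) : (fixedPoints H X)ᶜ.ncard ≤ Nat.card H := by
  simpa [Set.compl_eq_univ_sdiff] using
    ncard_sdiff_fixedPoints_le_card hH (Y := Set.univ) fun _ _ => Set.subset_univ _

theorem card_fixingSubgroup_compl [Finite X] (s : Set X) :
    Nat.card (fixingSubgroup (Perm X) sᶜ) = s.ncard.factorial := by
  classical
  rw [← Nat.card_coe_set_eq, ← Nat.card_perm]
  exact Nat.card_congr ((Perm.subtypeEquivSubtypePerm (· ∈ s)).trans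
    (Equiv.subtypeEquivRight fun f => by simp [mem_fixingSubgroup_iff, Perm.smul_def])).symm

theorem le_fixingSubgroup_fixedPoints (H : Subgroup (Perm X)) :
    H ≤ fixingSubgroup (Perm X) (fixedPoints H X) := fun g hg =>
  (mem_fixingSubgroup_iff (Perm X)).mpr fun _ hy => mem_fixedPoints_subgroup_iff.mp hy g hg

theorem card_dvd_factorial_ncard_compl_fixedPoints [Finite X] (H : Subgroup (Perm X)) :
    Nat.card H ∣ (fixedPoints H X)ᶜ.ncard.factorial := by
  rw [← card_fixingSubgroup_compl, compl_compl]
  exact Subgroup.card_dvd_of_le (le_fixingSubgroup_fixedPoints H)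

theorem disjoint_fixingSubgroup_compl_fixedPoints (H : Subgroup (Perm X)) :
    Disjoint H (fixingSubgroup (Perm X) (fixedPoints H X)ᶜ) := by
  have := disjoint_fixingSubgroup_compl (disjoint_compl_left (a := fixedPoints H X))
  rw [compl_compl] at this
  exact this.mono_left (le_fixingSubgroup_fixedPoints H)

theorem compl_fixedPoints_subset_of_le_fixingSubgroup {H : Subgroup (Perm X)} {s : Set X}
    (hH : H ≤ fixingSubgroup (Perm X) sᶜ) : (fixedPoints H X)ᶜ ⊆ s := fun x hx => by
  by_contra hxs
  exact hx (mem_fixedPoints_subgroup_iff.mpr fun g hg =>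
    (mem_fixingSubgroup_iff (Perm X)).mp (hH hg) x hxs)

theorem disjoint_of_mem_of_mem_fixingSubgroup_compl {H : Subgroup (Perm X)} {a b : Perm X}
    (ha : a ∈ H) (hb : b ∈ fixingSubgroup (Perm X) (fixedPoints H X)ᶜ) : a.Disjoint b :=
  fun x => by
    by_cases hx : x ∈ fixedPoints H X
    · exact Or.inl (mem_fixedPoints_subgroup_iff.mp hx a ha)
    · exact Or.inr ((mem_fixingSubgroup_iff (Perm X)).mp hb x hx)

theorem apply_mem_fixedPoints_of_mem_normalizer {H : Subgroup (Perm X)} {g : Perm X}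
    (hg : g ∈ Subgroup.normalizer H) {y : X} (hy : y ∈ fixedPoints H X) :
    g y ∈ fixedPoints H X := by
  refine mem_fixedPoints_subgroup_iff.mpr fun u hu => ?_
  have := mem_fixedPoints_subgroup_iff.mp hy _ ((Subgroup.mem_normalizer_iff''.mp hg u).mp hu)
  rwa [Perm.mul_apply, Perm.mul_apply, Perm.inv_eq_iff_eq] at this

theorem conj_mem_fixingSubgroup_compl_fixedPoints {H : Subgroup (Perm X)} {g h : Perm X}
    (hg : g ∈ Subgroup.normalizer H) (hh : h ∈ fixingSubgroup (Perm X) (fixedPoints H X)ᶜ) :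
    g * h * g⁻¹ ∈ fixingSubgroup (Perm X) (fixedPoints H X)ᶜ := by
  refine (mem_fixingSubgroup_iff (Perm X)).mpr fun y hy => ?_
  have hy' : g⁻¹ y ∉ fixedPoints H X := fun h' => hy (by
    simpa using apply_mem_fixedPoints_of_mem_normalizer hg h')
  have := (mem_fixingSubgroup_iff (Perm X)).mp hh _ hy'
  simp only [Perm.smul_def, Perm.mul_apply] at this ⊢
  rw [this]
  exact g.apply_symm_apply y

theorem fixingSubgroup_compl_fixedPoints_le_normalizer {H J : Subgroup (Perm X)} (hJH : J ≤ H) :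
    fixingSubgroup (Perm X) (fixedPoints H X)ᶜ ≤ Subgroup.normalizer J := by
  refine fun g hg => Subgroup.centralizer_le_normalizer _
    (Subgroup.mem_centralizer_iff.mpr fun u hu => ?_)
  exact (disjoint_of_mem_of_mem_fixingSubgroup_compl (hJH hu) hg).commute.eq

theorem exists_isSwap_eq_closure [Fintype X] [DecidableEq X] {H : Subgroup (Perm X)}
    (hH : Nat.card H = 2) (hmoved : (fixedPoints H X)ᶜ.ncard ≤ 3) :
    ∃ a ∈ H, a.IsSwap ∧ H = Subgroup.closure {a} := by
  obtain ⟨⟨a, haH⟩, ha1⟩ := (Subgroup.ne_bot_iff_exists_ne_one (H := H)).mp fun h => by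
    rw [h, Subgroup.card_bot] at hH
    omega
  replace ha1 : a ≠ 1 := fun h => ha1 (by subst h; rfl)
  have ha2 : a ^ 2 = 1 := by
    simpa [hH] using congrArg Subtype.val (pow_card_eq_one' (G := H) (x := ⟨a, haH⟩))
  have hsupp : a.support.card ≤ 3 := by
    refine le_trans ?_ hmoved
    rw [← Set.ncard_coe_finset]
    exact Set.ncard_le_ncard fun x hx hfix =>
      Perm.mem_support.mp hx (mem_fixedPoints_subgroup_iff.mp hfix a haH)
  have hswap : a.IsSwap := by
    have h2 := Perm.two_dvd_card_support ha2
    have h0 : a.support.card ≠ 0 := fun h => ha1 (Perm.card_support_eq_zero.mp h)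
    exact Perm.card_support_eq_two.mp (by omega)
  refine ⟨a, haH, hswap, (Subgroup.eq_of_le_of_card_ge ?_ ?_).symm⟩
  · exact (Subgroup.closure_le H).mpr (Set.singleton_subset_iff.mpr haH)
  · rw [hH, ← Subgroup.zpowers_eq_closure, Nat.card_zpowers, orderOf_eq_prime ha2 ha1]

end PermutationGroup

section RadicalSubgroup

variable {X : Type*} [Finite X] {p : ℕ} {K N S : Subgroup (Perm X)}

theorem ncard_fixedPoints_le_one_of_isPGroup (hK : IsPCoreOf p N K)
    (hNK : N ≤ Subgroup.normalizer K) (hTN : fixingSubgroup (Perm X) (fixedPoints K X)ᶜ ≤ N)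
    (hTp : IsPGroup p (fixingSubgroup (Perm X) (fixedPoints K X)ᶜ)) :
    (fixedPoints K X).ncard ≤ 1 := by
  have hTK := hK.2.2.2 _ hTN hTp fun g hg h hh =>
    conj_mem_fixingSubgroup_compl_fixedPoints (hNK hg) hh
  have hT := card_fixingSubgroup_compl (fixedPoints K X)
  rwa [(disjoint_fixingSubgroup_compl_fixedPoints K).eq_bot_of_ge hTK,
    Subgroup.card_bot, eq_comm, Nat.factorial_eq_one] at hT

variable [Fact p.Prime]

theorem eq_two_of_card_le (hKp : IsPGroup p K) (hKop : orbitProduct K ≤ K) (hKbot : K ≠ ⊥)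
    (hNK : N ≤ Subgroup.normalizer K) (hTN : fixingSubgroup (Perm X) (fixedPoints K X)ᶜ ≤ N)
    (hS : IsSylowIn p N S) (hKS : K < S) (hSX : Nat.card S ≤ Nat.card X) :
    p = 2 ∧ (fixedPoints K X).ncard / 2 = 1 ∧ 2 ≤ (fixedPoints K X)ᶜ.ncard ∧
      (fixedPoints K X)ᶜ.ncard ≤ (fixedPoints K X).ncard := by
  have hp : p.Prime := Fact.out
  set F := fixedPoints K X
  set T := fixingSubgroup (Perm X) Fᶜ
  have hX : F.ncard + Fᶜ.ncard = Nat.card X := Set.ncard_add_ncard_compl F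
  have htK : Fᶜ.ncard ≤ Nat.card K := ncard_compl_fixedPoints_le_card hKop
  have hpK : p ∣ Nat.card K :=
    hKp.card_eq_or_dvd.resolve_left fun h => hKbot (Subgroup.card_eq_one.mp h)
  have hpt : p ≤ Fᶜ.ncard :=
    (Nat.Prime.dvd_factorial hp).mp (hpK.trans (card_dvd_factorial_ncard_compl_fixedPoints K))
  have hST : p ^ (F.ncard / p) ≤ Nat.card (S ⊓ T : Subgroup (Perm X)) :=
    Nat.le_of_dvd Nat.card_pos (hS.pow_dvd_card_inf hTN
      (fun g hg h hh => conj_mem_fixingSubgroup_compl_fixedPoints (hNK hg) hh)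
      (card_fixingSubgroup_compl F ▸ hp.pow_div_dvd_factorial _))
  have hprod : Nat.card K * Nat.card (S ⊓ T : Subgroup (Perm X)) ≤ Nat.card S :=
    Subgroup.card_mul_card_le_of_disjoint hKS.le inf_le_left
      ((disjoint_fixingSubgroup_compl_fixedPoints K).mono_right inf_le_right)
  have hstep : p * Nat.card K ≤ Nat.card S := hS.2.1.mul_card_le_card_of_lt_s8 hKS
  obtain ⟨rfl, hf, htf⟩ := Nat.eq_two_of_mul_pow_div_le hp.two_le hpt
    (by nlinarith [Nat.mul_le_mul htK hST]) (by nlinarith)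
  exact ⟨rfl, hf, hpt, htf⟩

theorem card_eq_two_of_card_le (hK : IsPCoreOf p N K) (hKop : orbitProduct K ≤ K)
    (hKbot : K ≠ ⊥) (hNK : N ≤ Subgroup.normalizer K)
    (hTN : fixingSubgroup (Perm X) (fixedPoints K X)ᶜ ≤ N) (hS : IsSylowIn p N S) (hKS : K < S)
    (hSX : Nat.card S ≤ Nat.card X) :
    p = 2 ∧ (fixedPoints K X).ncard = 3 ∧ (fixedPoints K X)ᶜ.ncard = 2 ∧
      Nat.card K = 2 := by
  obtain ⟨rfl, hf, h2t, htf⟩ := eq_two_of_card_le hK.2.1 hKop hKbot hNK hTN hS hKS hSX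
  have hf3 : (fixedPoints K X).ncard = 3 := by
    by_contra hf3
    have := ncard_fixedPoints_le_one_of_isPGroup hK hNK hTN (IsPGroup.of_card (n := 1) (by
      rw [card_fixingSubgroup_compl, (by omega : (fixedPoints K X).ncard = 2)]
      rfl))
    omega
  have htK := ncard_compl_fixedPoints_le_card hKop
  have hKt := card_dvd_factorial_ncard_compl_fixedPoints K
  have ht2 : (fixedPoints K X)ᶜ.ncard = 2 := by
    obtain ⟨m, hm⟩ := hK.2.1.exists_card_eq
    by_contra ht
    rw [hm, (by omega : (fixedPoints K X)ᶜ.ncard = 3)] at hKt htK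
    have hm3 : m < 3 := (Nat.pow_lt_pow_iff_right (by norm_num)).mp
      ((Nat.le_of_dvd (Nat.factorial_pos 3) hKt).trans_lt (by decide))
    interval_cases m <;> revert hKt htK <;> decide
  refine ⟨rfl, hf3, ht2, ?_⟩
  rw [ht2] at hKt htK
  exact le_antisymm (Nat.le_of_dvd two_pos hKt) htK

theorem exists_swaps_of_card_le [Fintype X] [DecidableEq X]
    (hK : IsPCoreOf p N K) (hKop : orbitProduct K ≤ K) (hKbot : K ≠ ⊥)
    (hNK : N ≤ Subgroup.normalizer K) (hTN : fixingSubgroup (Perm X) (fixedPoints K X)ᶜ ≤ N)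
    (hS : IsSylowIn p N S) (hKS : K < S) (hSX : Nat.card S ≤ Nat.card X) :
    p = 2 ∧ Nat.card X = 5 ∧ Nat.card K = 2 ∧ ∃ a b : Perm X, a.IsSwap ∧ b.IsSwap ∧
      a.Disjoint b ∧ K = Subgroup.closure {a} ∧ S = Subgroup.closure {a, b} := by
  obtain ⟨rfl, hf, ht, hK2⟩ := card_eq_two_of_card_le hK hKop hKbot hNK hTN hS hKS hSX
  set T := fixingSubgroup (Perm X) (fixedPoints K X)ᶜ
  have hX : Nat.card X = 5 := by rw [← Set.ncard_add_ncard_compl (fixedPoints K X), hf, ht]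
  have hTcard : Nat.card T = 6 := by rw [card_fixingSubgroup_compl, hf]; rfl
  have hKST : Disjoint K (S ⊓ T) :=
    (disjoint_fixingSubgroup_compl_fixedPoints K).mono_right inf_le_right
  have hST2 : 2 ∣ Nat.card (S ⊓ T : Subgroup (Perm X)) :=
    pow_one 2 ▸ hS.pow_dvd_card_inf hTN
      (fun g hg h hh => conj_mem_fixingSubgroup_compl_fixedPoints (hNK hg) hh)
      (by rw [hTcard]; decide)
  have hS4 : Nat.card S = 4 := by
    have hprod := Subgroup.card_mul_card_le_of_disjoint hKS.le inf_le_left hKST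
    rw [hK2] at hprod
    have := Nat.le_of_dvd Nat.card_pos hST2
    obtain ⟨m, hm⟩ := hS.2.1.exists_card_eq
    have : m < 3 := (Nat.pow_lt_pow_iff_right (a := 2) (by norm_num)).mp (by omega)
    interval_cases m <;> omega
  have hSTcard : Nat.card (S ⊓ T : Subgroup (Perm X)) = 2 := by
    have := Nat.dvd_gcd (hS4 ▸ Subgroup.card_dvd_of_le inf_le_left)
      (hTcard ▸ Subgroup.card_dvd_of_le (inf_le_right : S ⊓ T ≤ T))
    exact le_antisymm (Nat.le_of_dvd two_pos this) (Nat.le_of_dvd Nat.card_pos hST2)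
  obtain ⟨a, haK, ha, rfl⟩ := exists_isSwap_eq_closure hK2 (by omega)
  obtain ⟨b, hbST, hb, hbcl⟩ := exists_isSwap_eq_closure hSTcard ((Set.ncard_le_ncard
    (compl_fixedPoints_subset_of_le_fixingSubgroup inf_le_right)).trans hf.le)
  refine ⟨rfl, hX, hK2, a, b, ha, hb, disjoint_of_mem_of_mem_fixingSubgroup_compl haK
    (Subgroup.mem_inf.mp hbST).2, rfl, (Subgroup.eq_of_le_of_card_ge ?_ ?_).symm⟩
  · exact (Subgroup.closure_le S).mpr (Set.insert_subset (hKS.le haK)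
      (Set.singleton_subset_iff.mpr (Subgroup.mem_inf.mp hbST).1))
  · have := Subgroup.card_mul_card_le_of_disjoint
      (Subgroup.closure_mono (Set.singleton_subset_iff.mpr (Set.mem_insert a {b})))
      (hbcl.trans_le (Subgroup.closure_mono (Set.subset_insert a {b}))) hKST
    rw [hK2, hSTcard] at this
    omega

end RadicalSubgroup

/-- If 1 = P_0 ⊊ P_1 ⊊ … ⊊ P_k ⊆ Σ_X is a radical p-chain of length k ≥ 2 in the symmetric
group of a finite set X with n elements, then either |P_k| > n, or p = 2, n = 5, k = 2 and
the chain consists of the subgroups generated by two disjoint transpositions. -/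
theorem stmt8 (p : ℕ) (hp : p.Prime) (X : Type*) [Fintype X] [DecidableEq X]
    (k : ℕ) (hk : 2 ≤ k)
    (P : Fin (k + 1) → Subgroup (Equiv.Perm X))
    (hP0 : P 0 = ⊥)
    (hmono : ∀ i : Fin k, P i.castSucc < P i.succ)
    (hpgrp : ∀ i, IsPGroup p (P i))
    (hcore : ∀ i : Fin (k + 1), (i : ℕ) ≤ k - 1 →
      IsPCoreOf p (⨅ (j : Fin (k + 1)) (_ : j ≤ i), Subgroup.normalizer (P j : Set (Equiv.Perm X))) (P i))
    (hsyl : IsSylowIn p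
      (⨅ (j : Fin (k + 1)) (_ : (j : ℕ) ≤ k - 1), Subgroup.normalizer (P j : Set (Equiv.Perm X)))
      (P (Fin.last k))) :
    Fintype.card X < Nat.card (P (Fin.last k)) ∨
    (p = 2 ∧ Fintype.card X = 5 ∧ k = 2 ∧
      ∃ a b : Equiv.Perm X, a.IsSwap ∧ b.IsSwap ∧ a.Disjoint b ∧
        P 1 = Subgroup.closure {a} ∧ P (Fin.last k) = Subgroup.closure {a, b}) := by
  have : Fact p.Prime := ⟨hp⟩
  rcases lt_or_ge (Fintype.card X) (Nat.card (P (Fin.last k))) with hbig | hsmall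
  · exact Or.inl hbig
  right
  have hP : StrictMono P := Fin.strictMono_iff_lt_succ.mpr hmono
  set i₀ : Fin (k + 1) := ⟨k - 1, by omega⟩
  have hK := hcore i₀ le_rfl
  have hKop := orbitProduct_le_of_isPCoreOf_iInf hP.monotone i₀ fun j hj => hcore j hj
  have hKbot : P i₀ ≠ ⊥ :=
    hP0 ▸ (hP (show 0 < i₀ from Fin.lt_def.mpr (by simp [i₀]; omega))).ne'
  have hKS : P i₀ < P (Fin.last k) := hP (Fin.lt_def.mpr (by simp [i₀]; omega))
  have hNK : (⨅ (j : Fin (k + 1)) (_ : j ≤ i₀), Subgroup.normalizer (P j : Set (Perm X))) ≤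
      Subgroup.normalizer (P i₀ : Set (Perm X)) :=
    iInf₂_le (f := fun j (_ : j ≤ i₀) => Subgroup.normalizer (P j : Set (Perm X))) i₀ le_rfl
  have hTN : fixingSubgroup (Perm X) (fixedPoints (P i₀) X)ᶜ ≤
      ⨅ (j : Fin (k + 1)) (_ : j ≤ i₀), Subgroup.normalizer (P j : Set (Perm X)) :=
    le_iInf₂ fun j hj => fixingSubgroup_compl_fixedPoints_le_normalizer (hP.monotone hj)
  obtain ⟨rfl, hX, hK2, a, b, ha, hb, hab, hPa, hPab⟩ := exists_swaps_of_card_le hK hKop hKbot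
    hNK hTN hsyl hKS (hsmall.trans_eq Nat.card_eq_fintype_card.symm)
  have hk : k = 2 := by
    have h := IsPGroup.pow_le_card_of_strictMono hP hpgrp i₀
    rw [hK2] at h
    have : (i₀ : ℕ) ≤ 1 :=
      (Nat.pow_le_pow_iff_right (by norm_num : 1 < 2)).mp (h.trans_eq (pow_one 2).symm)
    simp only [i₀] at this
    omega
  subst hk
  exact ⟨rfl, by rwa [Nat.card_eq_fintype_card] at hX, rfl, a, b, ha, hb, hab, hPa, hPab⟩
end
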